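/- arXiv:2511.06473 — 10 statements merged into one kernel-verified Lean document; each statement's English description precedes it below -/
import Mathlib

section
/- Let G be a finite split graph and let I_s, I_t be independent sets of G with |I_s| = |I_t| ≥ 2. Let G′ be the graph obtained from G by adding one new vertex u adjacent to every vertex of G, and let k = |V(G′)| − |I_s| + 1. Let f_s be any proper k-coloring of G′ that assigns color 1 to every vertex of I_s and assigns pairwise distinct colors from {2,…,k} to the k−1 vertices of V(G′) ∖ I_s, and let f_t be any proper k-coloring of G′ defined analogously from I_t. Then I_s and I_t are reconfigurable under token sliding in G if and only if f_s and f_t are reconfigurable under color swapping in G′. -/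
/-- A proper `k`-coloring of `G`: a map `f : V → {1,…,k}` assigning different
colors to adjacent vertices. -/
def IsProperColoring {V : Type*} (G : SimpleGraph V) (k : ℕ) (f : V → ℕ) : Prop :=
  (∀ v, f v ∈ Finset.Icc 1 k) ∧ ∀ ⦃u w : V⦄, G.Adj u w → f u ≠ f w

/-- Two colorings are adjacent under color swapping: there is an edge `uw` whose
endpoint colors are exchanged, all other vertices keep their color, and the two
colorings are distinct. -/
def CSAdj {V : Type*} (G : SimpleGraph V) (f f' : V → ℕ) : Prop :=
  f ≠ f' ∧ ∃ u w : V, G.Adj u w ∧ f u = f' w ∧ f w = f' u ∧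
    ∀ x : V, x ≠ u → x ≠ w → f x = f' x

/-- One step of the color-swapping reconfiguration between proper `k`-colorings. -/
def CSStep {V : Type*} (G : SimpleGraph V) (k : ℕ) (f f' : V → ℕ) : Prop :=
  IsProperColoring G k f ∧ IsProperColoring G k f' ∧ CSAdj G f f'

/-- Two proper `k`-colorings are reconfigurable under color swapping. -/
def CSReconf {V : Type*} (G : SimpleGraph V) (k : ℕ) : (V → ℕ) → (V → ℕ) → Prop :=
  Relation.ReflTransGen (CSStep G k)

/-- `I` is an independent set of `G` (as a finset). -/
def IsIndepFinset {V : Type*} (G : SimpleGraph V) (I : Finset V) : Prop :=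
  ∀ u ∈ I, ∀ v ∈ I, ¬ G.Adj u v

/-- Two independent sets are adjacent under token sliding: their symmetric
difference consists of exactly two vertices joined by an edge of `G`. -/
def TSAdj {V : Type*} [DecidableEq V] (G : SimpleGraph V) (I J : Finset V) : Prop :=
  (symmDiff I J).card = 2 ∧ ∃ u v : V, G.Adj u v ∧ symmDiff I J = {u, v}

/-- One step of token-sliding reconfiguration between independent sets. -/
def TSStep {V : Type*} [DecidableEq V] (G : SimpleGraph V) (I J : Finset V) : Prop :=
  IsIndepFinset G I ∧ IsIndepFinset G J ∧ TSAdj G I J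

/-- Two independent sets are reconfigurable under token sliding. -/
def TSReconf {V : Type*} [DecidableEq V] (G : SimpleGraph V) :
    Finset V → Finset V → Prop :=
  Relation.ReflTransGen (TSStep G)

/-- `G` is a split graph: its vertex set is partitioned into a clique and an
independent set. -/
def IsSplitGraph {V : Type*} (G : SimpleGraph V) : Prop :=
  ∃ K S : Set V, (∀ v, v ∈ K ∨ v ∈ S) ∧ Disjoint K S ∧
    G.IsClique K ∧ ∀ u ∈ S, ∀ v ∈ S, ¬ G.Adj u v

/-- The graph obtained from `G` by adding one new universal vertex (`none`). -/
def addUniversal {V : Type*} (G : SimpleGraph V) : SimpleGraph (Option V) :=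
  SimpleGraph.fromRel (fun x y =>
    match x, y with
    | some u, some v => G.Adj u v
    | none, some _ => True
    | _, _ => False)


/-!
A token coloring of an independent set `I` (color `1` on `I`, the colors `2, …, k` once each
on the other vertices of `G′`) recovers `I` as its color class `1`. Sliding a token along an
edge `uv` of `G` is swapping the colors of `u` and `v`. Conversely, a color swap in `G′` either
moves color `1` along an edge of `G`, which is a token slide (it cannot move onto the universal
vertex, since a second vertex keeps color `1`), or exchanges two colors other than `1`, which
keeps `I`. Finally, any two token colorings of the same `I` are reconfigurable: the universal
vertex is adjacent to everything, so swaps with it realize every permutation of `2, …, k`.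
-/

open Finset Equiv

section ColorSwap

variable {W : Type*} [DecidableEq W] {H : SimpleGraph W} {f f' : W → ℕ} {a b : W}

lemma csAdj_comp_swap (hab : H.Adj a b) (hne : f a ≠ f b) : CSAdj H f (f ∘ swap a b) := by
  refine ⟨fun h => hne (by simpa using congrFun h a), a, b, hab, by simp, by simp,
    fun x hxa hxb => by simp [swap_apply_of_ne_of_ne hxa hxb]⟩

lemma CSAdj.exists_eq_comp_swap (h : CSAdj H f f') :
    ∃ a b, H.Adj a b ∧ f' = f ∘ swap a b := by
  obtain ⟨-, a, b, hab, ha, hb, hrest⟩ := h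
  refine ⟨a, b, hab, funext fun x => ?_⟩
  rcases eq_or_ne x a with rfl | hxa
  · simp [hb]
  rcases eq_or_ne x b with rfl | hxb
  · simp [ha]
  · simp [swap_apply_of_ne_of_ne hxa hxb, hrest x hxa hxb]

end ColorSwap

section TokenSliding

variable {V : Type*} [DecidableEq V] {G : SimpleGraph V} {I J : Finset V} {u v : V}

lemma symmDiff_pair_eq_insert_erase (hu : u ∈ I) (hv : v ∉ I) :
    symmDiff I {u, v} = insert v (I.erase u) := by
  ext x
  simp only [mem_symmDiff, mem_insert, mem_erase, mem_singleton]
  grind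

lemma tsStep_insert_erase (hI : IsIndepFinset G I) (hJ : IsIndepFinset G (insert v (I.erase u)))
    (huv : G.Adj u v) (hu : u ∈ I) (hv : v ∉ I) : TSStep G I (insert v (I.erase u)) := by
  have h : symmDiff I (insert v (I.erase u)) = {u, v} := by
    rw [← symmDiff_pair_eq_insert_erase hu hv, symmDiff_symmDiff_cancel_left]
  exact ⟨hI, hJ, by rw [h, card_pair huv.ne], u, v, huv, h⟩

lemma TSStep.exists_eq_insert_erase (h : TSStep G I J) :
    ∃ u v, G.Adj u v ∧ u ∈ I ∧ v ∉ I ∧ J = insert v (I.erase u) := by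
  obtain ⟨hI, hJ, -, u, v, huv, hIJ⟩ := h
  have hJ_eq : J = symmDiff I {u, v} := by rw [← hIJ, symmDiff_symmDiff_cancel_left]
  have hmemJ : ∀ x ∈ ({u, v} : Finset V), x ∉ I → x ∈ J := fun x hx hxI => by
    rw [hJ_eq, mem_symmDiff]; exact Or.inr ⟨hx, hxI⟩
  by_cases hu : u ∈ I <;> by_cases hv : v ∈ I
  · exact absurd huv (hI u hu v hv)
  · exact ⟨u, v, huv, hu, hv, hJ_eq.trans (symmDiff_pair_eq_insert_erase hu hv)⟩
  · refine ⟨v, u, huv.symm, hv, hu, ?_⟩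
    rw [hJ_eq, pair_comm, symmDiff_pair_eq_insert_erase hv hu]
  · exact absurd huv (hJ u (hmemJ u (by simp) hu) v (hmemJ v (by simp) hv))

end TokenSliding

section TokenColoring

variable {V : Type*} {G : SimpleGraph V} {k : ℕ} {I J : Finset V} {u v w : V} {x : Option V}
  {f : Option V → ℕ}

lemma addUniversal_adj_some_some : (addUniversal G).Adj (some u) (some v) ↔ G.Adj u v :=
  ⟨fun ⟨_, h⟩ => h.elim id fun h => h.symm, fun h => ⟨by simp [h.ne], Or.inl h⟩⟩

lemma addUniversal_adj_none_some : (addUniversal G).Adj none (some v) :=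
  ⟨by simp, Or.inl trivial⟩

lemma IsProperColoring.isIndepFinset_of_eq_one (hf : IsProperColoring (addUniversal G) k f)
    (hJ : ∀ v ∈ J, f (some v) = 1) : IsIndepFinset G J :=
  fun u hu v hv huv => hf.2 (addUniversal_adj_some_some.2 huv) ((hJ u hu).trans (hJ v hv).symm)

def NoToken (I : Finset V) (x : Option V) : Prop := ∀ v ∈ I, x ≠ some v

lemma noToken_iff_notMem_map : NoToken I x ↔ x ∉ I.map Function.Embedding.some := by
  simp [NoToken, eq_comm]

lemma noToken_none : NoToken I none := fun _ _ => Option.some_ne_none _ |>.symm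

lemma noToken_some : NoToken I (some w) ↔ w ∉ I := by
  simp [NoToken]

lemma not_noToken_iff : ¬ NoToken I x ↔ ∃ v ∈ I, x = some v := by
  simp [NoToken]

variable [DecidableEq V]

lemma noToken_insert_erase_iff (hu : u ∈ I) (hv : v ∉ I) :
    NoToken (insert v (I.erase u)) x ↔ NoToken I (swap (some u) (some v) x) := by
  cases x with
  | none => simp [noToken_none, swap_apply_of_ne_of_ne]
  | some w =>
    rw [← optionCongr_swap, optionCongr_apply, Option.map_some, noToken_some, noToken_some]
    rcases eq_or_ne w u with rfl | hwu
    · simp [hv, (ne_of_mem_of_not_mem hu hv)]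
    rcases eq_or_ne w v with rfl | hwv
    · simp [hu]
    · simp [swap_apply_of_ne_of_ne hwu hwv, hwu, hwv]

end TokenColoring

/-- The field `card_add` says `k = |V(G′)| - |I| + 1`: the `k - 1` colors `2, …, k` are used
exactly once each on the positions without a token. -/
structure IsTokenColoring {V : Type*} [Fintype V] (G : SimpleGraph V) (k : ℕ) (I : Finset V)
    (f : Option V → ℕ) : Prop where
  indep : IsIndepFinset G I
  eq_one : ∀ v ∈ I, f (some v) = 1
  mem_Icc_of_noToken : ∀ x, NoToken I x → f x ∈ Icc 2 k
  injOn : ∀ x y, NoToken I x → NoToken I y → f x = f y → x = y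
  card_add : I.card + k = Fintype.card V + 2

namespace IsTokenColoring

variable {V : Type*} [Fintype V] {G : SimpleGraph V} {k : ℕ} {I J : Finset V} {u v : V}
  {x y : Option V} {f f' g h : Option V → ℕ}

lemma eq_one_iff (hf : IsTokenColoring G k I f) : f x = 1 ↔ ¬ NoToken I x := by
  refine ⟨fun h1 hx => ?_, fun hx => ?_⟩
  · have := hf.mem_Icc_of_noToken x hx
    rw [mem_Icc, h1] at this
    omega
  · obtain ⟨v, hv, rfl⟩ := not_noToken_iff.1 hx
    exact hf.eq_one v hv

lemma mem_iff (hf : IsTokenColoring G k I f) : v ∈ I ↔ f (some v) = 1 := by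
  rw [hf.eq_one_iff, noToken_some, not_not]

lemma isProperColoring (hf : IsTokenColoring G k I f) :
    IsProperColoring (addUniversal G) k f := by
  refine ⟨fun x => ?_, fun x y hxy hfxy => ?_⟩
  · have h2k := mem_Icc.1 (hf.mem_Icc_of_noToken none noToken_none)
    by_cases hx : NoToken I x
    · exact Icc_subset_Icc_left (by omega) (hf.mem_Icc_of_noToken x hx)
    · rw [hf.eq_one_iff.2 hx, mem_Icc]
      omega
  by_cases hx1 : f x = 1
  · obtain ⟨u, hu, rfl⟩ := not_noToken_iff.1 (hf.eq_one_iff.1 hx1)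
    obtain ⟨v, hv, rfl⟩ := not_noToken_iff.1 (hf.eq_one_iff.1 (hfxy ▸ hx1))
    exact hf.indep u hu v hv (addUniversal_adj_some_some.1 hxy)
  · have hy1 : ¬ f y = 1 := hfxy ▸ hx1
    rw [hf.eq_one_iff, not_not] at hx1 hy1
    exact hxy.ne (hf.injOn x y hx1 hy1 hfxy)

lemma comp_perm (hf : IsTokenColoring G k I f) (hJ : IsIndepFinset G J) (hcard : J.card = I.card)
    (τ : Equiv.Perm (Option V)) (hτ : ∀ x, NoToken J x ↔ NoToken I (τ x)) :
    IsTokenColoring G k J (f ∘ τ) where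
  indep := hJ
  eq_one v hv := hf.eq_one_iff.2 ((hτ (some v)).not.1 (not_noToken_iff.2 ⟨v, hv, rfl⟩))
  mem_Icc_of_noToken x hx := hf.mem_Icc_of_noToken _ ((hτ x).1 hx)
  injOn x y hx hy hxy := τ.injective (hf.injOn _ _ ((hτ x).1 hx) ((hτ y).1 hy) hxy)
  card_add := hcard ▸ hf.card_add

variable [DecidableEq V]

/-- The `k - 1` non-token positions inject into `{2, …, k}`. -/
lemma exists_noToken_eq (hf : IsTokenColoring G k I f) {c : ℕ} (hc : c ∈ Icc 2 k) :
    ∃ x, NoToken I x ∧ f x = c := by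
  have hA : ∀ x, x ∈ (I.map Function.Embedding.some)ᶜ ↔ NoToken I x := fun x => by
    rw [mem_compl, noToken_iff_notMem_map]
  have hcard : #(I.map Function.Embedding.some)ᶜ = k - 1 := by
    rw [card_compl, card_map, Fintype.card_option]
    have := hf.card_add
    omega
  obtain ⟨x, hx, rfl⟩ := surjOn_of_injOn_of_card_le f
    (fun x hx => hf.mem_Icc_of_noToken x ((hA x).1 hx))
    (fun x hx y hy => hf.injOn x y ((hA x).1 hx) ((hA y).1 hy))
    (by rw [hcard, Nat.card_Icc]; omega) hc
  exact ⟨x, (hA x).1 hx, rfl⟩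

lemma comp_swap (hf : IsTokenColoring G k I f) (hx : NoToken I x) (hy : NoToken I y) :
    IsTokenColoring G k I (f ∘ swap x y) := by
  refine hf.comp_perm hf.indep rfl _ fun z => ?_
  rcases eq_or_ne z x with rfl | hzx
  · simp [hx, hy]
  rcases eq_or_ne z y with rfl | hzy
  · simp [hx, hy]
  · rw [swap_apply_of_ne_of_ne hzx hzy]

lemma comp_swap_some (hf : IsTokenColoring G k I f) (hu : u ∈ I) (hv : v ∉ I)
    (hJ : IsIndepFinset G (insert v (I.erase u))) :
    IsTokenColoring G k (insert v (I.erase u)) (f ∘ swap (some u) (some v)) := by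
  refine hf.comp_perm hJ ?_ _ fun x => noToken_insert_erase_iff hu hv
  rw [card_insert_of_notMem (by simp [hv]), card_erase_add_one hu]

lemma eq_of_forall_some_eq (hg : IsTokenColoring G k I g) (hh : IsTokenColoring G k I h)
    (hgh : ∀ v, g (some v) = h (some v)) : g = h := by
  funext x
  cases x with
  | some v => exact hgh v
  | none =>
    obtain ⟨x, hx, hhx⟩ := hh.exists_noToken_eq (hg.mem_Icc_of_noToken none noToken_none)
    cases x with
    | none => exact hhx.symm
    | some w =>
      exact absurd (hg.injOn _ _ hx noToken_none ((hgh w).trans hhx)) (Option.some_ne_none w)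

lemma csReconf_comp_swap_none (hf : IsTokenColoring G k I f) (hx : NoToken I x) :
    CSReconf (addUniversal G) k f (f ∘ swap none x) := by
  cases x with
  | none =>
    rw [swap_self, coe_refl, Function.comp_id]
    exact .refl
  | some w =>
    refine .single ⟨hf.isProperColoring, (hf.comp_swap noToken_none hx).isProperColoring,
      csAdj_comp_swap addUniversal_adj_none_some fun h => ?_⟩
    exact Option.some_ne_none w (hf.injOn _ _ noToken_none hx h).symm

theorem csReconf {g : Option V → ℕ} (hg : IsTokenColoring G k I g)
    (hh : IsTokenColoring G k I h) :
    CSReconf (addUniversal G) k g h := by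
  by_cases hgh : ∀ v, g (some v) = h (some v)
  · rw [eq_of_forall_some_eq hg hh hgh]
    exact .refl
  push Not at hgh
  obtain ⟨v, hv⟩ := hgh
  have hvI : NoToken I (some v) :=
    noToken_some.2 fun hvI => hv (by rw [hg.eq_one v hvI, hh.eq_one v hvI])
  obtain ⟨p, hp, hgp⟩ := hg.exists_noToken_eq (hh.mem_Icc_of_noToken _ hvI)
  -- park the color `h (some v)` on the universal vertex, then swap it onto `v`
  have hg₁ := hg.comp_swap noToken_none hp
  have hg₂ := hg₁.comp_swap noToken_none hvI
  have hsub :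
      ({w | ((g ∘ swap none p) ∘ swap none (some v)) (some w) ≠ h (some w)} : Finset V) ⊂
        ({w | g (some w) ≠ h (some w)} : Finset V) := by
    refine (ssubset_iff_of_subset fun w hw => ?_).2 ⟨v, ?_, ?_⟩
    · have hwv : w ≠ v := by rintro rfl; simp [hgp] at hw
      rw [mem_filter_univ, Function.comp_apply,
        swap_apply_of_ne_of_ne (Option.some_ne_none w) (by simpa using hwv)] at hw
      rw [mem_filter_univ]
      rcases eq_or_ne (some w) p with rfl | hwp
      · rw [hgp]
        exact fun h => hwv (Option.some_injective _ (hh.injOn _ _ hp hvI h.symm))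
      · rwa [Function.comp_apply, swap_apply_of_ne_of_ne (Option.some_ne_none w) hwp] at hw
    · simpa using hv
    · simp [hgp]
  exact (csReconf_comp_swap_none hg hp).trans
    ((csReconf_comp_swap_none hg₁ hvI).trans (csReconf hg₂ hh))
termination_by #{w | g (some w) ≠ h (some w)}
decreasing_by exact card_lt_card hsub

lemma exists_csStep_of_tsStep (hf : IsTokenColoring G k I f) (hIJ : TSStep G I J) :
    ∃ f', IsTokenColoring G k J f' ∧ CSStep (addUniversal G) k f f' := by
  obtain ⟨u, v, huv, hu, hv, rfl⟩ := hIJ.exists_eq_insert_erase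
  have hf' := hf.comp_swap_some hu hv hIJ.2.1
  refine ⟨_, hf', hf.isProperColoring, hf'.isProperColoring,
    csAdj_comp_swap (addUniversal_adj_some_some.2 huv) ?_⟩
  rw [hf.eq_one u hu]
  exact fun h => hf.mem_iff.not.1 hv h.symm

lemma exists_tsStep_of_swap (hf : IsTokenColoring G k I f) (hI : 2 ≤ I.card) (hu : u ∈ I)
    (hx : NoToken I x) (hux : (addUniversal G).Adj (some u) x)
    (hf' : IsProperColoring (addUniversal G) k (f ∘ swap (some u) x)) :
    ∃ J, IsTokenColoring G k J (f ∘ swap (some u) x) ∧ TSStep G I J := by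
  obtain ⟨w, rfl⟩ : ∃ w, x = some w := by
    refine Option.ne_none_iff_exists'.1 fun hx0 => ?_
    subst hx0
    -- a second token keeps color `1`, so the universal vertex cannot receive it
    obtain ⟨v, hv, hvu⟩ := exists_mem_ne hI u
    refine hf'.2 (addUniversal_adj_none_some (v := v)) ?_
    simp [swap_apply_of_ne_of_ne, hvu, hf.eq_one u hu, hf.eq_one v hv]
  have hw : w ∉ I := noToken_some.1 hx
  have hJ : IsIndepFinset G (insert w (I.erase u)) := hf'.isIndepFinset_of_eq_one fun v hv =>
    hf.eq_one_iff.2 ((noToken_insert_erase_iff hu hw).not.1 (not_noToken_iff.2 ⟨v, hv, rfl⟩))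
  exact ⟨_, hf.comp_swap_some hu hw hJ,
    tsStep_insert_erase hf.indep hJ (addUniversal_adj_some_some.1 hux) hu hw⟩

lemma exists_tsReconf_of_csStep (hf : IsTokenColoring G k I f) (hI : 2 ≤ I.card)
    (hff' : CSStep (addUniversal G) k f f') :
    ∃ J, IsTokenColoring G k J f' ∧ TSReconf G I J := by
  obtain ⟨-, hf', hadj⟩ := hff'
  obtain ⟨a, b, hab, rfl⟩ := hadj.exists_eq_comp_swap
  by_cases ha : NoToken I a <;> by_cases hb : NoToken I b
  · exact ⟨I, hf.comp_swap ha hb, .refl⟩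
  · obtain ⟨u, hu, rfl⟩ := not_noToken_iff.1 hb
    rw [swap_comm] at hf' ⊢
    obtain ⟨J, hJ, hIJ⟩ := hf.exists_tsStep_of_swap hI hu ha hab.symm hf'
    exact ⟨J, hJ, .single hIJ⟩
  · obtain ⟨u, hu, rfl⟩ := not_noToken_iff.1 ha
    obtain ⟨J, hJ, hIJ⟩ := hf.exists_tsStep_of_swap hI hu hb hab hf'
    exact ⟨J, hJ, .single hIJ⟩
  · obtain ⟨u, hu, rfl⟩ := not_noToken_iff.1 ha
    obtain ⟨v, hv, rfl⟩ := not_noToken_iff.1 hb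
    exact absurd (addUniversal_adj_some_some.1 hab) (hf.indep u hu v hv)

lemma exists_csReconf_of_tsReconf (hf : IsTokenColoring G k I f) (hIJ : TSReconf G I J) :
    ∃ f', IsTokenColoring G k J f' ∧ CSReconf (addUniversal G) k f f' := by
  induction hIJ with
  | refl => exact ⟨f, hf, .refl⟩
  | tail _ hstep ih =>
    obtain ⟨g, hg, hfg⟩ := ih
    obtain ⟨g', hg', hgg'⟩ := hg.exists_csStep_of_tsStep hstep
    exact ⟨g', hg', hfg.tail hgg'⟩

lemma exists_tsReconf_of_csReconf (hf : IsTokenColoring G k I f) (hI : 2 ≤ I.card)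
    (hff' : CSReconf (addUniversal G) k f f') :
    ∃ J, IsTokenColoring G k J f' ∧ TSReconf G I J := by
  induction hff' with
  | refl => exact ⟨I, hf, .refl⟩
  | tail _ hstep ih =>
    obtain ⟨J, hJ, hIJ⟩ := ih
    have hJ2 : 2 ≤ J.card := by have := hf.card_add; have := hJ.card_add; omega
    obtain ⟨J', hJ', hJJ'⟩ := hJ.exists_tsReconf_of_csStep hJ2 hstep
    exact ⟨J', hJ', hIJ.trans hJJ'⟩

end IsTokenColoring

theorem stmt_2_general {V : Type*} [Fintype V] [DecidableEq V] (G : SimpleGraph V)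
    (Is It : Finset V)
    (hIs : IsIndepFinset G Is) (hIt : IsIndepFinset G It)
    (hcard : Is.card = It.card) (h2 : 2 ≤ Is.card)
    (k : ℕ) (hk : k = Fintype.card (Option V) - Is.card + 1)
    (fs ft : Option V → ℕ)
    (hfs1 : ∀ v ∈ Is, fs (some v) = 1)
    (hfs2 : ∀ x : Option V, (∀ v ∈ Is, x ≠ some v) → fs x ∈ Finset.Icc 2 k)
    (hfs3 : ∀ x y : Option V, (∀ v ∈ Is, x ≠ some v) → (∀ v ∈ Is, y ≠ some v) →
      fs x = fs y → x = y)
    (hft1 : ∀ v ∈ It, ft (some v) = 1)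
    (hft2 : ∀ x : Option V, (∀ v ∈ It, x ≠ some v) → ft x ∈ Finset.Icc 2 k)
    (hft3 : ∀ x y : Option V, (∀ v ∈ It, x ≠ some v) → (∀ v ∈ It, y ≠ some v) →
      ft x = ft y → x = y) :
    TSReconf G Is It ↔ CSReconf (addUniversal G) k fs ft := by
  have hk' : Is.card + k = Fintype.card V + 2 := by
    have := Finset.card_le_univ Is
    rw [Fintype.card_option] at hk
    omega
  have hs : IsTokenColoring G k Is fs := ⟨hIs, hfs1, hfs2, hfs3, hk'⟩
  have ht : IsTokenColoring G k It ft := ⟨hIt, hft1, hft2, hft3, hcard ▸ hk'⟩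
  constructor
  · intro hTS
    obtain ⟨g, hg, hfsg⟩ := hs.exists_csReconf_of_tsReconf hTS
    exact hfsg.trans (hg.csReconf ht)
  · intro hCS
    obtain ⟨J, hJ, hIsJ⟩ := hs.exists_tsReconf_of_csReconf h2 hCS
    rwa [Finset.ext fun v => hJ.mem_iff.trans ht.mem_iff.symm] at hIsJ

/-- reduction from Token Sliding on split graphs to CRCS. -/
theorem stmt_2 {V : Type*} [Fintype V] [DecidableEq V] (G : SimpleGraph V)
    (hsplit : IsSplitGraph G) (Is It : Finset V)
    (hIs : IsIndepFinset G Is) (hIt : IsIndepFinset G It)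
    (hcard : Is.card = It.card) (h2 : 2 ≤ Is.card)
    (k : ℕ) (hk : k = Fintype.card (Option V) - Is.card + 1)
    (fs ft : Option V → ℕ)
    (hfs : IsProperColoring (addUniversal G) k fs)
    (hft : IsProperColoring (addUniversal G) k ft)
    (hfs1 : ∀ v ∈ Is, fs (some v) = 1)
    (hfs2 : ∀ x : Option V, (∀ v ∈ Is, x ≠ some v) → fs x ∈ Finset.Icc 2 k)
    (hfs3 : ∀ x y : Option V, (∀ v ∈ Is, x ≠ some v) → (∀ v ∈ Is, y ≠ some v) →
      fs x = fs y → x = y)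
    (hft1 : ∀ v ∈ It, ft (some v) = 1)
    (hft2 : ∀ x : Option V, (∀ v ∈ It, x ≠ some v) → ft x ∈ Finset.Icc 2 k)
    (hft3 : ∀ x y : Option V, (∀ v ∈ It, x ≠ some v) → (∀ v ∈ It, y ≠ some v) →
      ft x = ft y → x = y) :
    TSReconf G Is It ↔ CSReconf (addUniversal G) k fs ft :=
  stmt_2_general G Is It hIs hIt hcard h2 k hk fs ft hfs1 hfs2 hfs3 hft1 hft2 hft3
end

section
/- Let G be a finite bipartite graph with bipartition V(G) = S ∪ T into independent sets, and let I_s, I_t be independent sets of G with |I_s| = |I_t|. Let G′ be the graph obtained from G by adding six new vertices x₁, x₂, x₃, y₁, y₂, y₃, making x₁ adjacent to every vertex of T ∪ {y₁, y₂, y₃} and y₁ adjacent to every vertex of S ∪ {x₁, x₂, x₃} (so G′ is bipartite with parts S ∪ {x₁,x₂,x₃} and T ∪ {y₁,y₂,y₃}). Let k = |V(G′)| − |I_s| − 3. Let f_s be any proper k-coloring of G′ that assigns color 1 to every vertex of I_s ∪ {x₂, x₃, y₂, y₃} and assigns pairwise distinct colors from {2,…,k} to the k−1 remaining vertices, and let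 f_t be any proper k-coloring of G′ defined analogously from I_t. Then I_s and I_t are reconfigurable under token sliding in G if and only if f_s and f_t are reconfigurable under color swapping in G′. -/
/-- The graph `G'` of the bipartite reduction: `G` together with six new vertices
`x₁ = inr 0, x₂ = inr 1, x₃ = inr 2, y₁ = inr 3, y₂ = inr 4, y₃ = inr 5`, where
`x₁` is adjacent to every vertex of `T ∪ {y₁,y₂,y₃}` and `y₁` is adjacent to
every vertex of `S ∪ {x₁,x₂,x₃}`. -/
def addBipGadget {V : Type*} (G : SimpleGraph V) (S T : Set V) :
    SimpleGraph (V ⊕ Fin 6) :=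
  SimpleGraph.fromRel (fun x y =>
    match x, y with
    | Sum.inl u, Sum.inl v => G.Adj u v
    | Sum.inr i, Sum.inl u => (i = 0 ∧ u ∈ T) ∨ (i = 3 ∧ u ∈ S)
    | Sum.inr i, Sum.inr j => (i = 0 ∧ (j = 3 ∨ j = 4 ∨ j = 5)) ∨ (i = 3 ∧ (j = 1 ∨ j = 2))
    | Sum.inl _, Sum.inr _ => False)

/-- The vertices of `G'` that receive color 1 in the coloring built from the
independent set `I`: the (images of the) vertices of `I` together with
`x₂, x₃, y₂, y₃`. -/
def bipSpecial {V : Type*} (I : Finset V) (x : V ⊕ Fin 6) : Prop :=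
  (∃ v ∈ I, x = Sum.inl v) ∨ x = Sum.inr 1 ∨ x = Sum.inr 2 ∨ x = Sum.inr 4 ∨ x = Sum.inr 5

set_option linter.unusedSectionVars false
open Sum Finset

section ADJ
variable {V : Type*} {G : SimpleGraph V} {S T : Set V}

lemma adj_inl_inl {u v : V} : (addBipGadget G S T).Adj (inl u) (inl v) ↔ G.Adj u v := by
  simp only [addBipGadget, SimpleGraph.fromRel_adj, ne_eq, inl.injEq]
  constructor
  · rintro ⟨h, h1 | h1⟩
    · exact h1
    · exact h1.symm
  · intro h; exact ⟨h.ne, Or.inl h⟩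

lemma adj_inr_inl {i : Fin 6} {u : V} :
    (addBipGadget G S T).Adj (inr i) (inl u) ↔ (i = 0 ∧ u ∈ T) ∨ (i = 3 ∧ u ∈ S) := by
  simp only [addBipGadget, SimpleGraph.fromRel_adj]
  constructor
  · rintro ⟨h, h1 | h1⟩
    · exact h1
    · exact h1.elim
  · intro h; exact ⟨by simp, Or.inl h⟩

lemma adj_inl_inr {i : Fin 6} {u : V} :
    (addBipGadget G S T).Adj (inl u) (inr i) ↔ (i = 0 ∧ u ∈ T) ∨ (i = 3 ∧ u ∈ S) := by
  rw [SimpleGraph.adj_comm]; exact adj_inr_inl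

lemma adj_inr_inr {i j : Fin 6} :
    (addBipGadget G S T).Adj (inr i) (inr j) ↔ i ≠ j ∧
      (((i = 0 ∧ (j = 3 ∨ j = 4 ∨ j = 5)) ∨ (i = 3 ∧ (j = 1 ∨ j = 2))) ∨
       ((j = 0 ∧ (i = 3 ∨ i = 4 ∨ i = 5)) ∨ (j = 3 ∧ (i = 1 ∨ i = 2)))) := by
  simp only [addBipGadget, SimpleGraph.fromRel_adj, ne_eq, inr.injEq]

lemma adj_x2 {z : V ⊕ Fin 6} : (addBipGadget G S T).Adj (inr 1) z ↔ z = inr 3 := by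
  rcases z with u | j
  · rw [adj_inr_inl]; constructor
    · rintro (⟨h, -⟩ | ⟨h, -⟩) <;> exact absurd h (by decide)
    · intro h; exact absurd h (by simp)
  · rw [adj_inr_inr, inr.injEq]; revert j; decide

lemma adj_x3 {z : V ⊕ Fin 6} : (addBipGadget G S T).Adj (inr 2) z ↔ z = inr 3 := by
  rcases z with u | j
  · rw [adj_inr_inl]; constructor
    · rintro (⟨h, -⟩ | ⟨h, -⟩) <;> exact absurd h (by decide)
    · intro h; exact absurd h (by simp)
  · rw [adj_inr_inr, inr.injEq]; revert j; decide

lemma adj_y2 {z : V ⊕ Fin 6} : (addBipGadget G S T).Adj (inr 4) z ↔ z = inr 0 := by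
  rcases z with u | j
  · rw [adj_inr_inl]; constructor
    · rintro (⟨h, -⟩ | ⟨h, -⟩) <;> exact absurd h (by decide)
    · intro h; exact absurd h (by simp)
  · rw [adj_inr_inr, inr.injEq]; revert j; decide

lemma adj_y3 {z : V ⊕ Fin 6} : (addBipGadget G S T).Adj (inr 5) z ↔ z = inr 0 := by
  rcases z with u | j
  · rw [adj_inr_inl]; constructor
    · rintro (⟨h, -⟩ | ⟨h, -⟩) <;> exact absurd h (by decide)
    · intro h; exact absurd h (by simp)
  · rw [adj_inr_inr, inr.injEq]; revert j; decide

lemma adj_03 : (addBipGadget G S T).Adj (inr 0) (inr 3) := by rw [adj_inr_inr]; decide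
lemma adj_04 : (addBipGadget G S T).Adj (inr 0) (inr 4) := by rw [adj_inr_inr]; decide
lemma adj_05 : (addBipGadget G S T).Adj (inr 0) (inr 5) := by rw [adj_inr_inr]; decide
lemma adj_31 : (addBipGadget G S T).Adj (inr 3) (inr 1) := by rw [adj_inr_inr]; decide
lemma adj_32 : (addBipGadget G S T).Adj (inr 3) (inr 2) := by rw [adj_inr_inr]; decide

lemma sp_inl {I : Finset V} {v : V} : bipSpecial I (inl v) ↔ v ∈ I := by
  simp [bipSpecial]

lemma sp_inr {I : Finset V} {i : Fin 6} :
    bipSpecial I (inr i) ↔ (i = 1 ∨ i = 2 ∨ i = 4 ∨ i = 5) := by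
  simp [bipSpecial]

end ADJ
section CORE
variable {V : Type*} [DecidableEq V] {G : SimpleGraph V} {S T : Set V}

/-- The standard shape of colorings arising from an independent set `I`. -/
structure GoodCol (G : SimpleGraph V) (S T : Set V) (k : ℕ) (I : Finset V)
    (f : V ⊕ Fin 6 → ℕ) : Prop where
  proper : IsProperColoring (addBipGadget G S T) k f
  h1 : ∀ x, bipSpecial I x → f x = 1
  h2 : ∀ x, ¬ bipSpecial I x → f x ∈ Finset.Icc 2 k
  h3 : ∀ x y, ¬ bipSpecial I x → ¬ bipSpecial I y → f x = f y → x = y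

lemma GoodCol.sp_of_one {k : ℕ} {I : Finset V} {f : V ⊕ Fin 6 → ℕ}
    (hf : GoodCol G S T k I f) {x : V ⊕ Fin 6} (h : f x = 1) : bipSpecial I x := by
  by_contra hx
  have := hf.h2 x hx
  rw [Finset.mem_Icc] at this
  omega

lemma sp_indep {I : Finset V} (hI : IsIndepFinset G I) :
    ∀ z1 z2 : V ⊕ Fin 6, bipSpecial I z1 → bipSpecial I z2 →
      ¬ (addBipGadget G S T).Adj z1 z2 := by
  have key : ∀ (i : Fin 6), (i = 1 ∨ i = 2 ∨ i = 4 ∨ i = 5) →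
      ∀ z : V ⊕ Fin 6, (addBipGadget G S T).Adj (inr i) z →
        z = inr 0 ∨ z = inr 3 := by
    rintro i (rfl | rfl | rfl | rfl) z hz
    · exact Or.inr (adj_x2.1 hz)
    · exact Or.inr (adj_x3.1 hz)
    · exact Or.inl (adj_y2.1 hz)
    · exact Or.inl (adj_y3.1 hz)
  rintro z1 z2 h1 h2 hadj
  rcases z1 with u | i
  · rcases z2 with v | j
    · exact hI u (sp_inl.1 h1) v (sp_inl.1 h2) (adj_inl_inl.1 hadj)
    · rcases key j (sp_inr.1 h2) (inl u) hadj.symm with h | h <;> exact absurd h (by simp)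
  · rcases key i (sp_inr.1 h1) z2 hadj with rfl | rfl <;>
      · have := sp_inr.1 h2; revert this; decide
end CORE
section MASTER
variable {V : Type*} [DecidableEq V] {G : SimpleGraph V} {S T : Set V}

lemma masterSwap {k : ℕ} {I J : Finset V} {f : V ⊕ Fin 6 → ℕ} {a b : V ⊕ Fin 6}
    (hf : GoodCol G S T k I f)
    (hJ : ∀ z1 z2 : V ⊕ Fin 6, bipSpecial J z1 → bipSpecial J z2 →
      ¬ (addBipGadget G S T).Adj z1 z2)
    (hsp : ∀ z, bipSpecial J z ↔ bipSpecial I (Equiv.swap a b z))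
    (hab : (addBipGadget G S T).Adj a b) :
    CSStep (addBipGadget G S T) k f (f ∘ Equiv.swap a b) ∧
      GoodCol G S T k J (f ∘ Equiv.swap a b) := by
  set σ := Equiv.swap a b with hσ
  have hval : ∀ v, (f ∘ σ) v ∈ Finset.Icc 1 k := fun v => hf.proper.1 (σ v)
  have hprop : ∀ ⦃u w : V ⊕ Fin 6⦄, (addBipGadget G S T).Adj u w → (f ∘ σ) u ≠ (f ∘ σ) w := by
    intro u w hadj heq
    simp only [Function.comp_apply] at heq
    by_cases h1 : bipSpecial I (σ u)
    · have hu1 : f (σ u) = 1 := hf.h1 _ h1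
      have h2 : bipSpecial I (σ w) := hf.sp_of_one (by rw [← heq]; exact hu1)
      exact hJ u w ((hsp u).2 h1) ((hsp w).2 h2) hadj
    · by_cases h2 : bipSpecial I (σ w)
      · exact h1 (hf.sp_of_one (by rw [heq]; exact hf.h1 _ h2))
      · have := hf.h3 _ _ h1 h2 heq
        exact hadj.ne (σ.injective this)
  have hgood : GoodCol G S T k J (f ∘ σ) := by
    refine ⟨⟨hval, hprop⟩, ?_, ?_, ?_⟩
    · intro x hx; exact hf.h1 _ ((hsp x).1 hx)
    · intro x hx; exact hf.h2 _ (fun h => hx ((hsp x).2 h))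
    · intro x y hx hy hxy
      exact σ.injective (hf.h3 _ _ (fun h => hx ((hsp x).2 h)) (fun h => hy ((hsp y).2 h)) hxy)
  refine ⟨⟨hf.proper, hgood.proper, ?_, a, b, hab, ?_, ?_, ?_⟩, hgood⟩
  · intro h
    have := congrFun h a
    simp only [Function.comp_apply, hσ, Equiv.swap_apply_left] at this
    exact hf.proper.2 hab this
  · simp [hσ, Equiv.swap_apply_right]
  · simp [hσ, Equiv.swap_apply_left]
  · intro x hxa hxb
    simp [hσ, Equiv.swap_apply_of_ne_of_ne hxa hxb]

end MASTER
section FWD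
variable {V : Type*} [DecidableEq V] {G : SimpleGraph V} {S T : Set V}

lemma ts_adj_extract {I J : Finset V} (hI : IsIndepFinset G I) (hJ : IsIndepFinset G J)
    (h : TSAdj G I J) : ∃ u v : V, G.Adj u v ∧ u ∈ I ∧ u ∉ J ∧ v ∈ J ∧ v ∉ I ∧
      ∀ z : V, z ≠ u → z ≠ v → (z ∈ I ↔ z ∈ J) := by
  obtain ⟨-, u, v, hadj, hsd⟩ := h
  have hmem : ∀ z : V, (z = u ∨ z = v) ↔ ((z ∈ I ∧ z ∉ J) ∨ (z ∈ J ∧ z ∉ I)) := by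
    intro z
    have : z ∈ symmDiff I J ↔ z ∈ ({u, v} : Finset V) := by rw [hsd]
    simpa [Finset.mem_symmDiff, Finset.mem_insert, Finset.mem_singleton] using this.symm
  have hu := (hmem u).1 (Or.inl rfl)
  have hv := (hmem v).1 (Or.inr rfl)
  have hfix : ∀ z : V, z ≠ u → z ≠ v → (z ∈ I ↔ z ∈ J) := by
    intro z hzu hzv
    have := (hmem z)
    constructor
    · intro hzI; by_contra hzJ
      rcases (hmem z).2 (Or.inl ⟨hzI, hzJ⟩) with h | h <;> [exact hzu h; exact hzv h]
    · intro hzJ; by_contra hzI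
      rcases (hmem z).2 (Or.inr ⟨hzJ, hzI⟩) with h | h <;> [exact hzu h; exact hzv h]
  rcases hu with ⟨huI, huJ⟩ | ⟨huJ, huI⟩
  · rcases hv with ⟨hvI, hvJ⟩ | ⟨hvJ, hvI⟩
    · exact absurd hadj (hI u huI v hvI)
    · exact ⟨u, v, hadj, huI, huJ, hvJ, hvI, hfix⟩
  · rcases hv with ⟨hvI, hvJ⟩ | ⟨hvJ, hvI⟩
    · exact ⟨v, u, hadj.symm, hvI, hvJ, huJ, huI, fun z h1 h2 => hfix z h2 h1⟩
    · exact absurd hadj (hJ u huJ v hvJ)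

lemma slide_sp {I J : Finset V} {u v : V} (huI : u ∈ I) (huJ : u ∉ J) (hvJ : v ∈ J)
    (hvI : v ∉ I) (hfix : ∀ z : V, z ≠ u → z ≠ v → (z ∈ I ↔ z ∈ J)) (huv : u ≠ v) :
    ∀ z : V ⊕ Fin 6, bipSpecial J z ↔
      bipSpecial I (Equiv.swap (Sum.inl u) (Sum.inl v) z) := by
  intro z
  rcases z with w | i
  · by_cases h1 : w = u
    · subst h1
      rw [Equiv.swap_apply_left, sp_inl, sp_inl]
      exact ⟨fun h => absurd h huJ, fun h => absurd h hvI⟩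
    · by_cases h2 : w = v
      · subst h2
        rw [Equiv.swap_apply_right, sp_inl, sp_inl]
        exact ⟨fun _ => huI, fun _ => hvJ⟩
      · rw [Equiv.swap_apply_of_ne_of_ne (by simpa using h1) (by simpa using h2),
          sp_inl, sp_inl]
        exact (hfix w h1 h2).symm
  · rw [Equiv.swap_apply_of_ne_of_ne (by simp) (by simp), sp_inr, sp_inr]

lemma ts_simulate {k : ℕ} {I J : Finset V} (h : TSReconf G I J) :
    ∀ f : V ⊕ Fin 6 → ℕ, GoodCol G S T k I f →
      ∃ g, CSReconf (addBipGadget G S T) k f g ∧ GoodCol G S T k J g := by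
  induction h with
  | refl => exact fun f hf => ⟨f, Relation.ReflTransGen.refl, hf⟩
  | tail hIJ' hstep ih =>
    intro f hf
    obtain ⟨g, hreconf, hgood⟩ := ih f hf
    obtain ⟨hind1, hind2, hadj⟩ := hstep
    obtain ⟨u, v, huv, huI, huJ, hvJ, hvI, hfix⟩ := ts_adj_extract hind1 hind2 hadj
    have hstep' := masterSwap (S := S) (T := T) hgood (sp_indep hind2)
      (slide_sp huI huJ hvJ hvI hfix huv.ne) (adj_inl_inl.2 huv)
    exact ⟨_, hreconf.tail hstep'.1, hstep'.2⟩

end FWD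
section CANSWAP
variable {V : Type*} [DecidableEq V] {G : SimpleGraph V} {S T : Set V}

/-- We can realize the transposition of the colors of `x` and `y` by CS moves,
from any good coloring. -/
def CanSwap (G : SimpleGraph V) (S T : Set V) (k : ℕ) (I : Finset V)
    (x y : V ⊕ Fin 6) : Prop :=
  ∀ f : V ⊕ Fin 6 → ℕ, GoodCol G S T k I f →
    CSReconf (addBipGadget G S T) k f (f ∘ Equiv.swap x y) ∧
      GoodCol G S T k I (f ∘ Equiv.swap x y)

lemma canSwap_self {k : ℕ} {I : Finset V} (x : V ⊕ Fin 6) : CanSwap G S T k I x x := by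
  intro f hf
  have : f ∘ ⇑(Equiv.swap x x) = f := by
    funext z; simp [Equiv.swap_self]
  rw [this]
  exact ⟨Relation.ReflTransGen.refl, hf⟩

lemma canSwap_symm {k : ℕ} {I : Finset V} {x y : V ⊕ Fin 6}
    (h : CanSwap G S T k I x y) : CanSwap G S T k I y x := by
  rw [CanSwap, Equiv.swap_comm]; exact h

lemma canSwap_adj {k : ℕ} {I : Finset V} {x y : V ⊕ Fin 6}
    (hI : IsIndepFinset G I) (hx : ¬ bipSpecial I x) (hy : ¬ bipSpecial I y)
    (hadj : (addBipGadget G S T).Adj x y) : CanSwap G S T k I x y := by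
  intro f hf
  have hsp : ∀ z, bipSpecial I z ↔ bipSpecial I (Equiv.swap x y z) := by
    intro z
    by_cases h1 : z = x
    · subst h1; rw [Equiv.swap_apply_left]; exact ⟨fun h => absurd h hx, fun h => absurd h hy⟩
    · by_cases h2 : z = y
      · subst h2; rw [Equiv.swap_apply_right]
        exact ⟨fun h => absurd h hy, fun h => absurd h hx⟩
      · rw [Equiv.swap_apply_of_ne_of_ne h1 h2]
  have := masterSwap hf (sp_indep hI) hsp hadj
  exact ⟨Relation.ReflTransGen.single this.1, this.2⟩

lemma swap_triple {x h y z : V ⊕ Fin 6} (hxh : x ≠ h) (hyh : y ≠ h) (hxy : x ≠ y) :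
    Equiv.swap x h (Equiv.swap h y (Equiv.swap x h z)) = Equiv.swap x y z := by
  by_cases h1 : z = x
  · subst h1
    rw [Equiv.swap_apply_left, Equiv.swap_apply_left,
      Equiv.swap_apply_of_ne_of_ne hxy.symm hyh, Equiv.swap_apply_left]
  · by_cases h2 : z = y
    · subst h2
      rw [Equiv.swap_apply_of_ne_of_ne hxy.symm hyh, Equiv.swap_apply_right,
        Equiv.swap_apply_right, Equiv.swap_apply_right]
    · by_cases h3 : z = h
      · subst h3
        rw [Equiv.swap_apply_right, Equiv.swap_apply_of_ne_of_ne hxh (hxy),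
          Equiv.swap_apply_left, Equiv.swap_apply_of_ne_of_ne (Ne.symm hxh) (Ne.symm hyh)]
      · rw [Equiv.swap_apply_of_ne_of_ne h1 h3, Equiv.swap_apply_of_ne_of_ne h3 h2,
          Equiv.swap_apply_of_ne_of_ne h1 h3, Equiv.swap_apply_of_ne_of_ne h1 h2]

lemma canSwap_conj {k : ℕ} {I : Finset V} {x h y : V ⊕ Fin 6}
    (h1 : CanSwap G S T k I x h) (h2 : CanSwap G S T k I h y)
    (hxy : x ≠ y) (hyh : y ≠ h) (hxh : x ≠ h) : CanSwap G S T k I x y := by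
  intro f hf
  obtain ⟨r1, g1⟩ := h1 f hf
  obtain ⟨r2, g2⟩ := h2 _ g1
  obtain ⟨r3, g3⟩ := h1 _ g2
  have heq : ((f ∘ ⇑(Equiv.swap x h)) ∘ ⇑(Equiv.swap h y)) ∘ ⇑(Equiv.swap x h)
      = f ∘ ⇑(Equiv.swap x y) := by
    funext z
    simp only [Function.comp_apply]
    rw [swap_triple hxh hyh hxy]
  rw [heq] at r3 g3
  exact ⟨(r1.trans r2).trans r3, g3⟩

lemma canSwap_a {k : ℕ} {I : Finset V} (hI : IsIndepFinset G I)
    (hcover : ∀ v : V, v ∈ S ∨ v ∈ T) (x : V ⊕ Fin 6) (hx : ¬ bipSpecial I x) :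
    CanSwap G S T k I x (inr 0) := by
  have hnsp0 : ¬ bipSpecial I (inr 0 : V ⊕ Fin 6) := by rw [sp_inr]; decide
  have hnsp3 : ¬ bipSpecial I (inr 3 : V ⊕ Fin 6) := by rw [sp_inr]; decide
  rcases x with u | i
  · rcases hcover u with hu | hu
    · -- u ∈ S : adjacent to inr 3, then inr 3 adjacent to inr 0
      have c1 : CanSwap G S T k I (inl u) (inr 3) :=
        canSwap_adj hI hx hnsp3 (adj_inl_inr.2 (Or.inr ⟨rfl, hu⟩))
      have c2 : CanSwap G S T k I (inr 3) (inr 0) :=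
        canSwap_adj hI hnsp3 hnsp0 adj_03.symm
      exact canSwap_conj c1 c2 (by simp) (by simp) (by simp)
    · exact canSwap_adj hI hx hnsp0 (adj_inl_inr.2 (Or.inl ⟨rfl, hu⟩))
  · have : i = 0 ∨ i = 3 := by
      rw [sp_inr] at hx
      have key : ∀ j : Fin 6, ¬(j = 1 ∨ j = 2 ∨ j = 4 ∨ j = 5) → j = 0 ∨ j = 3 := by decide
      exact key i hx
    rcases this with rfl | rfl
    · exact canSwap_self _
    · exact canSwap_adj hI hnsp3 hnsp0 adj_03.symm

lemma canSwap_all {k : ℕ} {I : Finset V} (hI : IsIndepFinset G I)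
    (hcover : ∀ v : V, v ∈ S ∨ v ∈ T) (x y : V ⊕ Fin 6)
    (hx : ¬ bipSpecial I x) (hy : ¬ bipSpecial I y) (hxy : x ≠ y) :
    CanSwap G S T k I x y := by
  by_cases h1 : y = inr 0
  · subst h1; exact canSwap_a hI hcover x hx
  · by_cases h2 : x = inr 0
    · subst h2; exact canSwap_symm (canSwap_a hI hcover y hy)
    · exact canSwap_conj (canSwap_a hI hcover x hx)
        (canSwap_symm (canSwap_a hI hcover y hy)) hxy h1 h2

end CANSWAP
section REACH
open Finset
variable {V : Type*} [DecidableEq V] {G : SimpleGraph V} {S T : Set V}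

instance bipSpecial.decPred (I : Finset V) : DecidablePred (bipSpecial I) := fun x => by
  unfold bipSpecial; infer_instance

lemma sp_filter [Fintype V] (I : Finset V) :
    Finset.univ.filter (fun z => bipSpecial I z) =
      I.image Sum.inl ∪ {Sum.inr 1, Sum.inr 2, Sum.inr 4, Sum.inr 5} := by
  ext z
  rcases z with v | i
  · simp [sp_inl]
  · simp [sp_inr]

lemma quad_card [Fintype V] :
    ({Sum.inr 1, Sum.inr 2, Sum.inr 4, Sum.inr 5} : Finset (V ⊕ Fin 6)).card = 4 := by
  rw [Finset.card_insert_of_notMem (by simp),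
    Finset.card_insert_of_notMem (by simp),
    Finset.card_insert_of_notMem (by simp), Finset.card_singleton]

lemma nonsp_card [Fintype V] (I : Finset V) :
    (Finset.univ.filter (fun z => ¬ bipSpecial I z)).card
      = Fintype.card V + 2 - I.card := by
  have h1 := Finset.card_filter_add_card_filter_not
    (s := (Finset.univ : Finset (V ⊕ Fin 6))) (p := fun z => bipSpecial I z)
  have h2 : (Finset.univ.filter (fun z => bipSpecial I z)).card = I.card + 4 := by
    rw [sp_filter, Finset.card_union_of_disjoint, Finset.card_image_of_injective _
      Sum.inl_injective, quad_card]
    · simp [Finset.disjoint_left]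
  have h3 : (Finset.univ : Finset (V ⊕ Fin 6)).card = Fintype.card V + 6 := by
    simp [Fintype.card_sum]
  have h4 : I.card ≤ Fintype.card V := Finset.card_le_univ I
  omega

lemma reach [Fintype V] {k : ℕ} {I : Finset V} (hI : IsIndepFinset G I)
    (hcover : ∀ v : V, v ∈ S ∨ v ∈ T)
    (hcount : (Finset.univ.filter (fun z => ¬ bipSpecial I z)).card = k - 1)
    (hk2 : 2 ≤ k)
    {ft : V ⊕ Fin 6 → ℕ} (hft : GoodCol G S T k I ft) :
    ∀ g, GoodCol G S T k I g → CSReconf (addBipGadget G S T) k g ft := by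
  suffices H : ∀ n : ℕ, ∀ g, GoodCol G S T k I g →
      (Finset.univ.filter (fun x => g x ≠ ft x)).card ≤ n →
      CSReconf (addBipGadget G S T) k g ft by
    intro g hg; exact H _ g hg le_rfl
  intro n
  induction n with
  | zero =>
    intro g hg hcard
    have hfe : g = ft := by
      funext x
      by_contra hx
      have : x ∈ Finset.univ.filter (fun x => g x ≠ ft x) := by
        simp [hx]
      rw [Finset.card_eq_zero.1 (Nat.le_zero.1 hcard)] at this
      exact absurd this (Finset.notMem_empty x)
    rw [hfe]
    exact Relation.ReflTransGen.refl
  | succ n ih =>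
    intro g hg hcard
    rcases Finset.eq_empty_or_nonempty (Finset.univ.filter (fun x => g x ≠ ft x)) with
      hD | ⟨x, hx⟩
    · have hfe : g = ft := by
        funext x
        by_contra hxx
        have : x ∈ Finset.univ.filter (fun x => g x ≠ ft x) := by simp [hxx]
        rw [hD] at this
        exact absurd this (Finset.notMem_empty x)
      rw [hfe]
      exact Relation.ReflTransGen.refl
    · have hgx : g x ≠ ft x := (Finset.mem_filter.1 hx).2
      have hnspx : ¬ bipSpecial I x := by
        intro hspx
        exact hgx ((hg.h1 x hspx).trans (hft.h1 x hspx).symm)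
      -- find y with g y = ft x
      set NS := Finset.univ.filter (fun z => ¬ bipSpecial I z) with hNS
      have himg : NS.image g = Finset.Icc 2 k := by
        apply Finset.eq_of_subset_of_card_le
        · intro c hc
          obtain ⟨z, hz, rfl⟩ := Finset.mem_image.1 hc
          exact hg.h2 z (Finset.mem_filter.1 hz).2
        · rw [Finset.card_image_of_injOn, hcount, Nat.card_Icc]
          · omega
          · intro a ha b hb hab
            exact hg.h3 a b (Finset.mem_filter.1 ha).2 (Finset.mem_filter.1 hb).2 hab
      have hftx : ft x ∈ NS.image g := by
        rw [himg]; exact hft.h2 x hnspx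
      obtain ⟨y, hyNS, hgy⟩ := Finset.mem_image.1 hftx
      have hnspy : ¬ bipSpecial I y := (Finset.mem_filter.1 hyNS).2
      have hyx : y ≠ x := by rintro rfl; exact hgx hgy
      obtain ⟨r, hg'⟩ := canSwap_all hI hcover x y hnspx hnspy (Ne.symm hyx) g hg
      have hsub : Finset.univ.filter (fun z => (g ∘ Equiv.swap x y) z ≠ ft z) ⊆
          (Finset.univ.filter (fun z => g z ≠ ft z)).erase x := by
        intro z hz
        have hz' : (g ∘ Equiv.swap x y) z ≠ ft z := (Finset.mem_filter.1 hz).2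
        have hzx : z ≠ x := by
          rintro rfl
          apply hz'
          simp only [Function.comp_apply, Equiv.swap_apply_left]
          exact hgy
        rw [Finset.mem_erase]
        refine ⟨hzx, Finset.mem_filter.2 ⟨Finset.mem_univ z, ?_⟩⟩
        by_cases hzy : z = y
        · subst hzy
          intro hgz
          exact hyx (hft.h3 _ _ hnspy hnspx (hgz.symm.trans hgy))
        · intro hgz
          apply hz'
          simp only [Function.comp_apply, Equiv.swap_apply_of_ne_of_ne hzx hzy]
          exact hgz
      have hxmem : x ∈ Finset.univ.filter (fun z => g z ≠ ft z) := hx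
      have hcard' : (Finset.univ.filter (fun z => (g ∘ Equiv.swap x y) z ≠ ft z)).card ≤ n := by
        have h1 := Finset.card_le_card hsub
        rw [Finset.card_erase_of_mem hxmem] at h1
        omega
      exact r.trans (ih _ hg' hcard')

end REACH
section BACK
open Sum Finset
variable {V : Type*} [Fintype V] [DecidableEq V] {G : SimpleGraph V} {S T : Set V}

lemma inr_ne' {i j : Fin 6} (h : i ≠ j) : (Sum.inr i : V ⊕ Fin 6) ≠ Sum.inr j :=
  fun hh => h (Sum.inr_injective hh)

/-- The independent set carried by a coloring: the vertices of `G` colored 1. -/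
noncomputable def Cset (f : V ⊕ Fin 6 → ℕ) : Finset V :=
  Finset.univ.filter (fun v => f (Sum.inl v) = 1)

lemma cset_indep {k : ℕ} {f : V ⊕ Fin 6 → ℕ}
    (hf : IsProperColoring (addBipGadget G S T) k f) : IsIndepFinset G (Cset f) := by
  intro a ha b hb hab
  exact hf.2 (adj_inl_inl.2 hab)
    ((Finset.mem_filter.1 ha).2.trans (Finset.mem_filter.1 hb).2.symm)

lemma backStep {k : ℕ} {f f' : V ⊕ Fin 6 → ℕ}
    (hstep : CSStep (addBipGadget G S T) k f f')
    (hInv : f (inr 1) = 1 ∧ f (inr 2) = 1 ∧ f (inr 4) = 1 ∧ f (inr 5) = 1) :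
    (f' (inr 1) = 1 ∧ f' (inr 2) = 1 ∧ f' (inr 4) = 1 ∧ f' (inr 5) = 1) ∧
      Relation.ReflTransGen (TSStep G) (Cset f) (Cset f') := by
  obtain ⟨hfp, hf'p, hne, u, w, hadj, huw, hwu, hfix⟩ := hstep
  have aux : ∀ a b : V ⊕ Fin 6, (addBipGadget G S T).Adj a b → f a = f' b →
      (∀ x, x ≠ a → x ≠ b → f x = f' x) →
      a ≠ inr 1 ∧ a ≠ inr 2 ∧ a ≠ inr 4 ∧ a ≠ inr 5 := by
    rintro a b hab hfab hfx
    refine ⟨?_, ?_, ?_, ?_⟩ <;> rintro rfl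
    · obtain rfl := adj_x2.1 hab
      have h1 : f' (inr 3) = 1 := by rw [← hfab]; exact hInv.1
      have h2 : f' (inr 2) = 1 := by
        rw [← hfx (inr 2) (inr_ne' (by decide)) (inr_ne' (by decide))]; exact hInv.2.1
      exact hf'p.2 adj_32 (h1.trans h2.symm)
    · obtain rfl := adj_x3.1 hab
      have h1 : f' (inr 3) = 1 := by rw [← hfab]; exact hInv.2.1
      have h2 : f' (inr 1) = 1 := by
        rw [← hfx (inr 1) (inr_ne' (by decide)) (inr_ne' (by decide))]; exact hInv.1
      exact hf'p.2 adj_31 (h1.trans h2.symm)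
    · obtain rfl := adj_y2.1 hab
      have h1 : f' (inr 0) = 1 := by rw [← hfab]; exact hInv.2.2.1
      have h2 : f' (inr 5) = 1 := by
        rw [← hfx (inr 5) (inr_ne' (by decide)) (inr_ne' (by decide))]; exact hInv.2.2.2
      exact hf'p.2 adj_05 (h1.trans h2.symm)
    · obtain rfl := adj_y3.1 hab
      have h1 : f' (inr 0) = 1 := by rw [← hfab]; exact hInv.2.2.2
      have h2 : f' (inr 4) = 1 := by
        rw [← hfx (inr 4) (inr_ne' (by decide)) (inr_ne' (by decide))]; exact hInv.2.2.1
      exact hf'p.2 adj_04 (h1.trans h2.symm)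
  have haux1 := aux u w hadj huw hfix
  have haux2 := aux w u hadj.symm hwu (fun x h1 h2 => hfix x h2 h1)
  have hInv' : f' (inr 1) = 1 ∧ f' (inr 2) = 1 ∧ f' (inr 4) = 1 ∧ f' (inr 5) = 1 := by
    refine ⟨?_, ?_, ?_, ?_⟩
    · rw [← hfix (inr 1) (Ne.symm haux1.1) (Ne.symm haux2.1)]; exact hInv.1
    · rw [← hfix (inr 2) (Ne.symm haux1.2.1) (Ne.symm haux2.2.1)]; exact hInv.2.1
    · rw [← hfix (inr 4) (Ne.symm haux1.2.2.1) (Ne.symm haux2.2.2.1)]; exact hInv.2.2.1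
    · rw [← hfix (inr 5) (Ne.symm haux1.2.2.2) (Ne.symm haux2.2.2.2)]; exact hInv.2.2.2
  refine ⟨hInv', ?_⟩
  have h0f : f (inr 0) ≠ 1 := fun h => hfp.2 adj_04 (h.trans hInv.2.2.1.symm)
  have h3f : f (inr 3) ≠ 1 := fun h => hfp.2 adj_31 (h.trans hInv.1.symm)
  have h0f' : f' (inr 0) ≠ 1 := fun h => hf'p.2 adj_04 (h.trans hInv'.2.2.1.symm)
  have h3f' : f' (inr 3) ≠ 1 := fun h => hf'p.2 adj_31 (h.trans hInv'.1.symm)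
  rcases u with p | i
  · rcases w with q | j
    · -- both in V : possibly a token slide
      have hG : G.Adj p q := adj_inl_inl.1 hadj
      have hfp' : f' (inl p) = f (inl q) := hwu.symm
      have hfq' : f' (inl q) = f (inl p) := huw.symm
      by_cases hp1 : f (inl p) = 1
      · have hq1 : f (inl q) ≠ 1 := fun h => hfp.2 hadj (hp1.trans h.symm)
        refine Relation.ReflTransGen.single
          ⟨cset_indep hfp, cset_indep hf'p, ?_, p, q, hG, ?_⟩
        · have : symmDiff (Cset f) (Cset f') = {p, q} := by
            ext v
            rw [Finset.mem_symmDiff]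
            simp only [Cset, Finset.mem_filter, Finset.mem_univ, true_and,
              Finset.mem_insert, Finset.mem_singleton]
            by_cases hvp : v = p
            · subst hvp
              simp [hp1, hfp', hq1]
            · by_cases hvq : v = q
              · subst hvq
                simp [hq1, hfq', hp1, hvp]
              · rw [hfix (inl v) (fun h => hvp (Sum.inl_injective h))
                  (fun h => hvq (Sum.inl_injective h))]
                simp [hvp, hvq]
          rw [this]
          exact Finset.card_pair hG.ne
        · ext v
          rw [Finset.mem_symmDiff]
          simp only [Cset, Finset.mem_filter, Finset.mem_univ, true_and,
            Finset.mem_insert, Finset.mem_singleton]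
          by_cases hvp : v = p
          · subst hvp
            simp [hp1, hfp', hq1]
          · by_cases hvq : v = q
            · subst hvq
              simp [hq1, hfq', hp1, hvp]
            · rw [hfix (inl v) (fun h => hvp (Sum.inl_injective h))
                (fun h => hvq (Sum.inl_injective h))]
              simp [hvp, hvq]
      · by_cases hq1 : f (inl q) = 1
        · refine Relation.ReflTransGen.single
            ⟨cset_indep hfp, cset_indep hf'p, ?_, q, p, hG.symm, ?_⟩
          · have : symmDiff (Cset f) (Cset f') = {q, p} := by
              ext v
              rw [Finset.mem_symmDiff]
              simp only [Cset, Finset.mem_filter, Finset.mem_univ, true_and,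
                Finset.mem_insert, Finset.mem_singleton]
              by_cases hvq : v = q
              · subst hvq
                simp [hq1, hfq', hp1]
              · by_cases hvp : v = p
                · subst hvp
                  simp [hp1, hfp', hq1, hvq]
                · rw [hfix (inl v) (fun h => hvp (Sum.inl_injective h))
                    (fun h => hvq (Sum.inl_injective h))]
                  simp [hvp, hvq]
            rw [this]
            exact Finset.card_pair hG.ne.symm
          · ext v
            rw [Finset.mem_symmDiff]
            simp only [Cset, Finset.mem_filter, Finset.mem_univ, true_and,
              Finset.mem_insert, Finset.mem_singleton]
            by_cases hvq : v = q
            · subst hvq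
              simp [hq1, hfq', hp1]
            · by_cases hvp : v = p
              · subst hvp
                simp [hp1, hfp', hq1, hvq]
              · rw [hfix (inl v) (fun h => hvp (Sum.inl_injective h))
                  (fun h => hvq (Sum.inl_injective h))]
                simp [hvp, hvq]
        · have : Cset f' = Cset f := by
            ext v
            simp only [Cset, Finset.mem_filter, Finset.mem_univ, true_and]
            by_cases hvp : v = p
            · subst hvp; rw [hfp']; exact ⟨fun h => absurd h hq1, fun h => absurd h hp1⟩
            · by_cases hvq : v = q
              · subst hvq; rw [hfq']; exact ⟨fun h => absurd h hp1, fun h => absurd h hq1⟩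
              · rw [hfix (inl v) (fun h => hvp (Sum.inl_injective h))
                  (fun h => hvq (Sum.inl_injective h))]
          rw [this]
    · -- u = inl p, w = inr j : no token moves
      have hj : (j = 0 ∧ p ∈ T) ∨ (j = 3 ∧ p ∈ S) := adj_inl_inr.1 hadj
      have hjf : f (inr j) ≠ 1 := by rcases hj with ⟨rfl, -⟩ | ⟨rfl, -⟩ <;> assumption
      have hjf' : f' (inr j) ≠ 1 := by rcases hj with ⟨rfl, -⟩ | ⟨rfl, -⟩ <;> assumption
      have hfp1 : f (inl p) ≠ 1 := by rw [huw]; exact hjf'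
      have hfp1' : f' (inl p) ≠ 1 := by rw [← hwu]; exact hjf
      have : Cset f' = Cset f := by
        ext v
        simp only [Cset, Finset.mem_filter, Finset.mem_univ, true_and]
        by_cases hvp : v = p
        · subst hvp; exact ⟨fun h => absurd h hfp1', fun h => absurd h hfp1⟩
        · rw [hfix (inl v) (fun h => hvp (Sum.inl_injective h)) (fun h => Sum.inl_ne_inr h)]
      rw [this]
  · rcases w with q | j
    · have hj : (i = 0 ∧ q ∈ T) ∨ (i = 3 ∧ q ∈ S) := adj_inr_inl.1 hadj
      have hjf : f (inr i) ≠ 1 := by rcases hj with ⟨rfl, -⟩ | ⟨rfl, -⟩ <;> assumption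
      have hjf' : f' (inr i) ≠ 1 := by rcases hj with ⟨rfl, -⟩ | ⟨rfl, -⟩ <;> assumption
      have hfq1 : f (inl q) ≠ 1 := by rw [hwu]; exact hjf'
      have hfq1' : f' (inl q) ≠ 1 := by rw [← huw]; exact hjf
      have : Cset f' = Cset f := by
        ext v
        simp only [Cset, Finset.mem_filter, Finset.mem_univ, true_and]
        by_cases hvq : v = q
        · subst hvq; exact ⟨fun h => absurd h hfq1', fun h => absurd h hfq1⟩
        · rw [hfix (inl v) (fun h => Sum.inl_ne_inr h) (fun h => hvq (Sum.inl_injective h))]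
      rw [this]
    · have : Cset f' = Cset f := by
        ext v
        simp only [Cset, Finset.mem_filter, Finset.mem_univ, true_and]
        rw [hfix (inl v) (fun h => Sum.inl_ne_inr h) (fun h => Sum.inl_ne_inr h)]
      rw [this]

lemma backward {k : ℕ} {f g : V ⊕ Fin 6 → ℕ}
    (h : CSReconf (addBipGadget G S T) k f g)
    (hInv : f (inr 1) = 1 ∧ f (inr 2) = 1 ∧ f (inr 4) = 1 ∧ f (inr 5) = 1) :
    Relation.ReflTransGen (TSStep G) (Cset f) (Cset g) := by
  suffices H : (g (inr 1) = 1 ∧ g (inr 2) = 1 ∧ g (inr 4) = 1 ∧ g (inr 5) = 1) ∧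
      Relation.ReflTransGen (TSStep G) (Cset f) (Cset g) from H.2
  induction h with
  | refl => exact ⟨hInv, Relation.ReflTransGen.refl⟩
  | tail hr hstep ih =>
    obtain ⟨hi, hts⟩ := ih
    obtain ⟨hi', hts'⟩ := backStep hstep hi
    exact ⟨hi', hts.trans hts'⟩

end BACK
section MAIN
open Sum Finset

lemma cset_eq {V : Type*} [Fintype V] [DecidableEq V]
    {k : ℕ} {I : Finset V} {f : V ⊕ Fin 6 → ℕ}
    (h1 : ∀ x : V ⊕ Fin 6, bipSpecial I x → f x = 1)
    (h2 : ∀ x : V ⊕ Fin 6, ¬ bipSpecial I x → f x ∈ Finset.Icc 2 k) :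
    Cset f = I := by
  ext v
  simp only [Cset, Finset.mem_filter, Finset.mem_univ, true_and]
  constructor
  · intro hv
    by_contra hvI
    have := h2 (inl v) (fun h => hvI (sp_inl.1 h))
    rw [Finset.mem_Icc] at this
    omega
  · intro hv
    exact h1 (inl v) (sp_inl.2 hv)

end MAIN

/-- reduction from Token Sliding on bipartite graphs to CRCS. -/
theorem stmt_3 {V : Type*} [Fintype V] [DecidableEq V] (G : SimpleGraph V)
    (S T : Set V) (hcover : ∀ v, v ∈ S ∨ v ∈ T) (hdisj : Disjoint S T)
    (hSind : ∀ u ∈ S, ∀ v ∈ S, ¬ G.Adj u v) (hTind : ∀ u ∈ T, ∀ v ∈ T, ¬ G.Adj u v)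
    (Is It : Finset V) (hIs : IsIndepFinset G Is) (hIt : IsIndepFinset G It)
    (hcard : Is.card = It.card)
    (k : ℕ) (hk : k = Fintype.card (V ⊕ Fin 6) - Is.card - 3)
    (fs ft : V ⊕ Fin 6 → ℕ)
    (hfs : IsProperColoring (addBipGadget G S T) k fs)
    (hft : IsProperColoring (addBipGadget G S T) k ft)
    (hfs1 : ∀ x : V ⊕ Fin 6, bipSpecial Is x → fs x = 1)
    (hfs2 : ∀ x : V ⊕ Fin 6, ¬ bipSpecial Is x → fs x ∈ Finset.Icc 2 k)
    (hfs3 : ∀ x y : V ⊕ Fin 6, ¬ bipSpecial Is x → ¬ bipSpecial Is y →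
      fs x = fs y → x = y)
    (hft1 : ∀ x : V ⊕ Fin 6, bipSpecial It x → ft x = 1)
    (hft2 : ∀ x : V ⊕ Fin 6, ¬ bipSpecial It x → ft x ∈ Finset.Icc 2 k)
    (hft3 : ∀ x y : V ⊕ Fin 6, ¬ bipSpecial It x → ¬ bipSpecial It y →
      ft x = ft y → x = y) :
    TSReconf G Is It ↔ CSReconf (addBipGadget G S T) k fs ft := by
  have h6 : Fintype.card (V ⊕ Fin 6) = Fintype.card V + 6 := by
    simp [Fintype.card_sum]
  have hle : It.card ≤ Fintype.card V := Finset.card_le_univ It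
  constructor
  · intro hts
    have hGs : GoodCol G S T k Is fs := ⟨hfs, hfs1, hfs2, hfs3⟩
    have hGt : GoodCol G S T k It ft := ⟨hft, hft1, hft2, hft3⟩
    obtain ⟨g, hr, hgood⟩ := ts_simulate (S := S) (T := T) hts fs hGs
    have hcount : (Finset.univ.filter (fun z => ¬ bipSpecial It z)).card = k - 1 := by
      rw [nonsp_card]
      omega
    have hk2 : 2 ≤ k := by omega
    exact hr.trans (reach hIt hcover hcount hk2 hGt g hgood)
  · intro hcs
    have hInv : fs (inr 1) = 1 ∧ fs (inr 2) = 1 ∧ fs (inr 4) = 1 ∧ fs (inr 5) = 1 :=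
      ⟨hfs1 _ (Or.inr (Or.inl rfl)), hfs1 _ (Or.inr (Or.inr (Or.inl rfl))),
        hfs1 _ (Or.inr (Or.inr (Or.inr (Or.inl rfl)))),
        hfs1 _ (Or.inr (Or.inr (Or.inr (Or.inr rfl))))⟩
    have hb := backward (G := G) (S := S) (T := T) hcs hInv
    rwa [cset_eq hfs1 hfs2, cset_eq hft1 hft2] at hb
end

section
/- Let G be a finite simple graph, k a positive integer, and g_s, g_t proper k-colorings of G. Let G′ be the graph obtained from G by adding, for each vertex v of G, k−1 new vertices v₁, …, v_{k−1} and all edges needed so that C_v = {v, v₁, …, v_{k−1}} is a clique (the new vertices have no neighbors outside C_v). Let f_s be any proper k-coloring of G′ with f_s(v) = g_s(v) for all v ∈ V(G), and let f_t be any proper k-coloring of G′ with f_t(v) = g_t(v) for all v ∈ V(G). Then g_s and g_t are reconfigurable under single-vertex recoloring in G if and only if f_s and f_t are reconfigurable under color swapping in G′. -/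
/-- Two colorings are adjacent under single-vertex recoloring: they differ on
exactly one vertex. -/
def SVAdj {V : Type*} (f f' : V → ℕ) : Prop :=
  ∃ u : V, f u ≠ f' u ∧ ∀ w : V, w ≠ u → f w = f' w

/-- One step of single-vertex-recoloring reconfiguration between proper
`k`-colorings. -/
def SVStep {V : Type*} (G : SimpleGraph V) (k : ℕ) (f f' : V → ℕ) : Prop :=
  IsProperColoring G k f ∧ IsProperColoring G k f' ∧ SVAdj f f'

/-- Two proper `k`-colorings are reconfigurable under single-vertex recoloring. -/
def SVReconf {V : Type*} (G : SimpleGraph V) (k : ℕ) : (V → ℕ) → (V → ℕ) → Prop :=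
  Relation.ReflTransGen (SVStep G k)

/-- The graph `G'` obtained from `G` by attaching, to each vertex `v`, `k - 1` new
vertices `(v, 0), …, (v, k-2)` so that `C_v = {v} ∪ ({v} × Fin (k-1))` is a clique;
the new vertices have no neighbors outside `C_v`. -/
def cliqueBlowup {V : Type*} (G : SimpleGraph V) (k : ℕ) :
    SimpleGraph (V ⊕ V × Fin (k - 1)) :=
  SimpleGraph.fromRel (fun x y =>
    match x, y with
    | Sum.inl u, Sum.inl v => G.Adj u v
    | Sum.inl u, Sum.inr (v, _) => u = v
    | Sum.inr (u, _), Sum.inr (v, _) => u = v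
    | Sum.inr _, Sum.inl _ => False)

-- ===== auxiliary lemmas =====

lemma CB.adj_ll {V : Type*} (G : SimpleGraph V) (k : ℕ) (u v : V) :
    (cliqueBlowup G k).Adj (Sum.inl u) (Sum.inl v) ↔ G.Adj u v := by
  simp only [cliqueBlowup, SimpleGraph.fromRel_adj]
  constructor
  · rintro ⟨-, h | h⟩; exact h; exact h.symm
  · intro h; exact ⟨by simpa using h.ne, Or.inl h⟩

lemma CB.adj_lr {V : Type*} (G : SimpleGraph V) (k : ℕ) (u v : V) (j : Fin (k-1)) :
    (cliqueBlowup G k).Adj (Sum.inl u) (Sum.inr (v, j)) ↔ u = v := by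
  simp only [cliqueBlowup, SimpleGraph.fromRel_adj]
  constructor
  · rintro ⟨-, h | h⟩; exact h; exact h.elim
  · intro h; exact ⟨by simp, Or.inl h⟩

lemma CB.adj_rl {V : Type*} (G : SimpleGraph V) (k : ℕ) (u : V) (i : Fin (k-1)) (v : V) :
    (cliqueBlowup G k).Adj (Sum.inr (u, i)) (Sum.inl v) ↔ u = v := by
  rw [SimpleGraph.adj_comm, CB.adj_lr]
  exact eq_comm

lemma CB.adj_rr {V : Type*} (G : SimpleGraph V) (k : ℕ) (u v : V) (i j : Fin (k-1)) :
    (cliqueBlowup G k).Adj (Sum.inr (u, i)) (Sum.inr (v, j)) ↔ u = v ∧ i ≠ j := by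
  simp only [cliqueBlowup, SimpleGraph.fromRel_adj]
  constructor
  · rintro ⟨hne, h | h⟩
    · subst h; exact ⟨rfl, by simpa using hne⟩
    · subst h; exact ⟨rfl, by simpa using hne⟩
  · rintro ⟨rfl, hij⟩; exact ⟨by simp [hij], Or.inl rfl⟩

lemma CB.restrict {V : Type*} (G : SimpleGraph V) (k : ℕ)
    {f : V ⊕ V × Fin (k-1) → ℕ} (hf : IsProperColoring (cliqueBlowup G k) k f) :
    IsProperColoring G k (fun v => f (Sum.inl v)) :=
  ⟨fun v => hf.1 _, fun u w h => hf.2 ((CB.adj_ll G k u w).mpr h)⟩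

lemma CB.clique_surj {V : Type*} (G : SimpleGraph V) {k : ℕ} (hk : 1 ≤ k)
    {f : V ⊕ V × Fin (k-1) → ℕ} (hf : IsProperColoring (cliqueBlowup G k) k f)
    (v : V) {c : ℕ} (hc : c ∈ Finset.Icc 1 k) (hne : c ≠ f (Sum.inl v)) :
    ∃ j : Fin (k-1), f (Sum.inr (v, j)) = c := by
  classical
  set h : Option (Fin (k-1)) → ℕ :=
    fun o => Option.elim o (f (Sum.inl v)) (fun j => f (Sum.inr (v, j))) with hh
  have hnone : h none = f (Sum.inl v) := rfl
  have hsome : ∀ j, h (some j) = f (Sum.inr (v, j)) := fun j => rfl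
  have hinj : Function.Injective h := by
    intro a b hab
    match a, b with
    | none, none => rfl
    | none, some j =>
      exact absurd ((hnone.symm.trans hab).trans (hsome j))
        (hf.2 ((CB.adj_lr G k v v j).mpr rfl))
    | some j, none =>
      exact absurd (((hsome j).symm.trans hab).trans hnone).symm
        (hf.2 ((CB.adj_lr G k v v j).mpr rfl))
    | some i, some j =>
      have : i = j := by
        by_contra hij
        exact hf.2 ((CB.adj_rr G k v v i j).mpr ⟨rfl, hij⟩)
          (((hsome i).symm.trans hab).trans (hsome j))
      rw [this]
  have hsub : Finset.image h Finset.univ ⊆ Finset.Icc 1 k := by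
    intro x hx
    obtain ⟨o, -, rfl⟩ := Finset.mem_image.mp hx
    match o with
    | none => exact hf.1 _
    | some j => exact hf.1 _
  have heq : Finset.image h Finset.univ = Finset.Icc 1 k := by
    apply Finset.eq_of_subset_of_card_le hsub
    rw [Finset.card_image_of_injective _ hinj, Finset.card_univ]
    simp only [Fintype.card_option, Fintype.card_fin, Nat.card_Icc]
    omega
  have hcmem : c ∈ Finset.image h Finset.univ := heq ▸ hc
  obtain ⟨o, -, ho⟩ := Finset.mem_image.mp hcmem
  match o with
  | none => exact absurd (hnone ▸ ho).symm hne
  | some j => exact ⟨j, (hsome j) ▸ ho⟩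

open Classical in
noncomputable def swapC {A : Type*} (f : A → ℕ) (x y : A) : A → ℕ :=
  fun z => if z = x then f y else if z = y then f x else f z

lemma swapC_fst {A : Type*} (f : A → ℕ) (x y : A) : swapC f x y x = f y := by
  simp [swapC]

lemma swapC_snd {A : Type*} (f : A → ℕ) {x y : A} (h : y ≠ x) : swapC f x y y = f x := by
  simp [swapC, h]

lemma swapC_other {A : Type*} (f : A → ℕ) {x y z : A} (h1 : z ≠ x) (h2 : z ≠ y) :
    swapC f x y z = f z := by
  simp [swapC, h1, h2]

lemma swap_step {A : Type*} (H : SimpleGraph A) (k : ℕ) (f : A → ℕ)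
    (hf : IsProperColoring H k f) {x y : A} (hxy : H.Adj x y)
    (hx : ∀ z, H.Adj x z → z ≠ y → f y ≠ f z)
    (hy : ∀ z, H.Adj y z → z ≠ x → f x ≠ f z) :
    CSStep H k f (swapC f x y) := by
  have hproper : IsProperColoring H k (swapC f x y) := by
    constructor
    · intro v
      rcases eq_or_ne v x with rfl | hvx
      · rw [swapC_fst]; exact hf.1 y
      rcases eq_or_ne v y with rfl | hvy
      · rw [swapC_snd f hxy.ne']; exact hf.1 x
      · rw [swapC_other f hvx hvy]; exact hf.1 v
    · intro a b hab
      rcases eq_or_ne a x with rfl | hax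
      · rw [swapC_fst]
        rcases eq_or_ne b y with rfl | hby
        · rw [swapC_snd f hxy.ne']; exact (hf.2 hxy).symm
        · rw [swapC_other f hab.ne' hby]; exact hx b hab hby
      rcases eq_or_ne a y with rfl | hay
      · rw [swapC_snd f hxy.ne']
        rcases eq_or_ne b x with rfl | hbx
        · rw [swapC_fst]; exact hf.2 hxy
        · rw [swapC_other f hbx hab.ne']; exact hy b hab hbx
      rw [swapC_other f hax hay]
      rcases eq_or_ne b x with rfl | hbx
      · rw [swapC_fst]; exact fun h => hx a hab.symm hay h.symm
      rcases eq_or_ne b y with rfl | hby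
      · rw [swapC_snd f hxy.ne']; exact fun h => hy a hab.symm hax h.symm
      · rw [swapC_other f hbx hby]; exact hf.2 hab
  refine ⟨hf, hproper, ?_, x, y, hxy, ?_, ?_, ?_⟩
  · intro h
    have := congrFun h x
    rw [swapC_fst] at this
    exact hf.2 hxy this
  · exact (swapC_snd f hxy.ne').symm
  · exact (swapC_fst f x y).symm
  · exact fun z h1 h2 => (swapC_other f h1 h2).symm

open Classical in
lemma CB.sort {V : Type*} [Fintype V] (G : SimpleGraph V) {k : ℕ} (hk : 1 ≤ k)
    (f' : V ⊕ V × Fin (k-1) → ℕ) (hf' : IsProperColoring (cliqueBlowup G k) k f') :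
    ∀ n (f : V ⊕ V × Fin (k-1) → ℕ), IsProperColoring (cliqueBlowup G k) k f →
      (∀ v, f (Sum.inl v) = f' (Sum.inl v)) →
      (Finset.univ.filter
        (fun p : V × Fin (k-1) => f (Sum.inr p) ≠ f' (Sum.inr p))).card ≤ n →
      CSReconf (cliqueBlowup G k) k f f' := by
  intro n
  induction n with
  | zero =>
    intro f hf hagree hcard
    have hempty : (Finset.univ.filter
        (fun p : V × Fin (k-1) => f (Sum.inr p) ≠ f' (Sum.inr p))) = ∅ :=
      Finset.card_eq_zero.mp (le_antisymm hcard (Nat.zero_le _))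
    have hfeq : f = f' := by
      funext z
      match z with
      | Sum.inl v => exact hagree v
      | Sum.inr p =>
        by_contra hne
        have : p ∈ (∅ : Finset (V × Fin (k-1))) :=
          hempty ▸ Finset.mem_filter.mpr ⟨Finset.mem_univ _, hne⟩
        exact absurd this (Finset.notMem_empty _)
    rw [hfeq]
    exact Relation.ReflTransGen.refl
  | succ n ih =>
    intro f hf hagree hcard
    by_cases hfeq : f = f'
    · rw [hfeq]; exact Relation.ReflTransGen.refl
    rcases Finset.eq_empty_or_nonempty (Finset.univ.filter
        (fun p : V × Fin (k-1) => f (Sum.inr p) ≠ f' (Sum.inr p))) with he | hne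
    · exfalso
      apply hfeq
      funext z
      match z with
      | Sum.inl v => exact hagree v
      | Sum.inr p =>
        by_contra hne2
        have : p ∈ (∅ : Finset (V × Fin (k-1))) :=
          he ▸ Finset.mem_filter.mpr ⟨Finset.mem_univ _, hne2⟩
        exact absurd this (Finset.notMem_empty _)
    obtain ⟨⟨v, j⟩, hp⟩ := hne
    have hpdiff : f (Sum.inr (v, j)) ≠ f' (Sum.inr (v, j)) := (Finset.mem_filter.mp hp).2
    have hcIcc : f' (Sum.inr (v, j)) ∈ Finset.Icc 1 k := hf'.1 _
    have hcv : f' (Sum.inr (v, j)) ≠ f (Sum.inl v) := by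
      rw [hagree v]
      exact (hf'.2 ((CB.adj_lr G k v v j).mpr rfl)).symm
    obtain ⟨j', hj'⟩ := CB.clique_surj G hk hf v hcIcc hcv
    have hjj' : j' ≠ j := by
      rintro rfl; exact hpdiff hj'
    have hadj : (cliqueBlowup G k).Adj (Sum.inr (v, j)) (Sum.inr (v, j')) :=
      (CB.adj_rr G k v v j j').mpr ⟨rfl, hjj'.symm⟩
    have hx : ∀ z, (cliqueBlowup G k).Adj (Sum.inr (v, j)) z → z ≠ Sum.inr (v, j') →
        f (Sum.inr (v, j')) ≠ f z := by
      intro z hz hzy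
      match z with
      | Sum.inl w =>
        have : v = w := (CB.adj_rl G k v j w).mp hz
        subst this
        rw [hj']; exact hcv
      | Sum.inr (w, j'') =>
        obtain ⟨rfl, hne3⟩ := (CB.adj_rr G k v w j j'').mp hz
        have hj2 : j' ≠ j'' := by
          rintro rfl; exact hzy rfl
        exact hf.2 ((CB.adj_rr G k v v j' j'').mpr ⟨rfl, hj2⟩)
    have hy : ∀ z, (cliqueBlowup G k).Adj (Sum.inr (v, j')) z → z ≠ Sum.inr (v, j) →
        f (Sum.inr (v, j)) ≠ f z := by
      intro z hz hzx
      match z with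
      | Sum.inl w =>
        have : v = w := (CB.adj_rl G k v j' w).mp hz
        subst this
        exact hf.2 ((CB.adj_rl G k v j v).mpr rfl)
      | Sum.inr (w, j'') =>
        obtain ⟨rfl, hne3⟩ := (CB.adj_rr G k v w j' j'').mp hz
        have hj2 : j ≠ j'' := by
          rintro rfl; exact hzx rfl
        exact hf.2 ((CB.adj_rr G k v v j j'').mpr ⟨rfl, hj2⟩)
    have hstep := swap_step (cliqueBlowup G k) k f hf hadj hx hy
    set f2 := swapC f (Sum.inr (v, j)) (Sum.inr (v, j')) with hf2def
    apply Relation.ReflTransGen.head hstep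
    apply ih f2 hstep.2.1
    · intro w
      rw [hf2def, swapC_other f (by simp) (by simp)]
      exact hagree w
    · -- card bound
      have hsub : (Finset.univ.filter
          (fun p : V × Fin (k-1) => f2 (Sum.inr p) ≠ f' (Sum.inr p))) ⊆
          (Finset.univ.filter
          (fun p : V × Fin (k-1) => f (Sum.inr p) ≠ f' (Sum.inr p))).erase (v, j) := by
        intro q hq
        have hqd : f2 (Sum.inr q) ≠ f' (Sum.inr q) := (Finset.mem_filter.mp hq).2
        have hq1 : q ≠ (v, j) := by
          rintro rfl
          apply hqd
          rw [hf2def, swapC_fst, hj']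
        apply Finset.mem_erase.mpr
        refine ⟨hq1, Finset.mem_filter.mpr ⟨Finset.mem_univ _, ?_⟩⟩
        rcases eq_or_ne q (v, j') with rfl | hq2
        · -- f (inr (v,j')) = f' (inr (v,j)) ≠ f' (inr (v,j'))
          rw [hj']
          exact hf'.2 ((CB.adj_rr G k v v j j').mpr ⟨rfl, hjj'.symm⟩)
        · rw [hf2def, swapC_other f (by simpa using hq1) (by simpa using hq2)] at hqd
          exact hqd
      have h1 := Finset.card_le_card hsub
      have h2 := Finset.card_erase_of_mem hp
      omega

lemma CB.fwd_step {V : Type*} (G : SimpleGraph V) {k : ℕ} (hk : 1 ≤ k)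
    {g g' : V → ℕ} (hstep : SVStep G k g g')
    (f : V ⊕ V × Fin (k-1) → ℕ) (hf : IsProperColoring (cliqueBlowup G k) k f)
    (hext : ∀ v, f (Sum.inl v) = g v) :
    ∃ f2, IsProperColoring (cliqueBlowup G k) k f2 ∧ (∀ v, f2 (Sum.inl v) = g' v) ∧
      CSStep (cliqueBlowup G k) k f f2 := by
  obtain ⟨hg, hg', u, hu, hoth⟩ := hstep
  have hc : g' u ∈ Finset.Icc 1 k := hg'.1 u
  have hcne : g' u ≠ f (Sum.inl u) := by
    rw [hext]; exact fun h => hu h.symm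
  obtain ⟨j, hj⟩ := CB.clique_surj G hk hf u hc hcne
  have hadj : (cliqueBlowup G k).Adj (Sum.inl u) (Sum.inr (u, j)) :=
    (CB.adj_lr G k u u j).mpr rfl
  have hx : ∀ z, (cliqueBlowup G k).Adj (Sum.inl u) z → z ≠ Sum.inr (u, j) →
      f (Sum.inr (u, j)) ≠ f z := by
    intro z hz hzy
    match z with
    | Sum.inl w =>
      have hG : G.Adj u w := (CB.adj_ll G k u w).mp hz
      rw [hj, hext w, hoth w hG.ne']
      exact hg'.2 hG
    | Sum.inr (w, j'') =>
      have : u = w := (CB.adj_lr G k u w j'').mp hz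
      subst this
      have hj2 : j ≠ j'' := by rintro rfl; exact hzy rfl
      exact hf.2 ((CB.adj_rr G k u u j j'').mpr ⟨rfl, hj2⟩)
  have hy : ∀ z, (cliqueBlowup G k).Adj (Sum.inr (u, j)) z → z ≠ Sum.inl u →
      f (Sum.inl u) ≠ f z := by
    intro z hz hzx
    match z with
    | Sum.inl w =>
      have : u = w := (CB.adj_rl G k u j w).mp hz
      exact absurd (this ▸ rfl) hzx
    | Sum.inr (w, j'') =>
      obtain ⟨rfl, -⟩ := (CB.adj_rr G k u w j j'').mp hz
      exact hf.2 ((CB.adj_lr G k u u j'').mpr rfl)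
  have hstep2 := swap_step (cliqueBlowup G k) k f hf hadj hx hy
  refine ⟨swapC f (Sum.inl u) (Sum.inr (u, j)), hstep2.2.1, ?_, hstep2⟩
  intro v
  rcases eq_or_ne v u with rfl | hv
  · rw [swapC_fst, hj]
  · rw [swapC_other f (by simpa using hv) (by simp), hext v, hoth v hv]

lemma CB.fwd {V : Type*} (G : SimpleGraph V) {k : ℕ} (hk : 1 ≤ k)
    {gs gt : V → ℕ} (h : SVReconf G k gs gt) :
    ∀ f, IsProperColoring (cliqueBlowup G k) k f → (∀ v, f (Sum.inl v) = gs v) →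
      ∃ f2, IsProperColoring (cliqueBlowup G k) k f2 ∧ (∀ v, f2 (Sum.inl v) = gt v) ∧
        CSReconf (cliqueBlowup G k) k f f2 := by
  induction h with
  | refl => exact fun f hf he => ⟨f, hf, he, Relation.ReflTransGen.refl⟩
  | tail hab hbc ih =>
    intro f hf he
    obtain ⟨f2, hf2, he2, hcs⟩ := ih f hf he
    obtain ⟨f3, hf3, he3, hstep⟩ := CB.fwd_step G hk hbc f2 hf2 he2
    exact ⟨f3, hf3, he3, hcs.tail hstep⟩

lemma CB.bwd_step {V : Type*} (G : SimpleGraph V) {k : ℕ} (hk : 1 ≤ k)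
    {f f' : V ⊕ V × Fin (k-1) → ℕ} (h : CSStep (cliqueBlowup G k) k f f') :
    SVReconf G k (fun v => f (Sum.inl v)) (fun v => f' (Sum.inl v)) := by
  obtain ⟨hf, hf', hne, x, y, hadj, hxy, hyx, hoth⟩ := h
  match x, y with
  | Sum.inl u, Sum.inl w =>
    exfalso
    have h1 : f (Sum.inl w) ∈ Finset.Icc 1 k := hf.1 _
    have h2 : f (Sum.inl w) ≠ f (Sum.inl u) := (hf.2 hadj).symm
    obtain ⟨j, hj⟩ := CB.clique_surj G hk hf u h1 h2
    have e1 : f (Sum.inr (u, j)) = f' (Sum.inr (u, j)) := hoth _ (by simp) (by simp)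
    have hcontra : f' (Sum.inl u) ≠ f' (Sum.inr (u, j)) :=
      hf'.2 ((CB.adj_lr G k u u j).mpr rfl)
    apply hcontra
    rw [← hyx, ← e1, hj]
  | Sum.inl u, Sum.inr (w, j) =>
    have : u = w := (CB.adj_lr G k u w j).mp hadj
    subst this
    apply Relation.ReflTransGen.single
    refine ⟨CB.restrict G k hf, CB.restrict G k hf', u, ?_, ?_⟩
    · show f (Sum.inl u) ≠ f' (Sum.inl u)
      rw [← hyx]
      exact hf.2 ((CB.adj_lr G k u u j).mpr rfl)
    · intro w' hw'
      exact hoth (Sum.inl w') (by simpa using hw') (by simp)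
  | Sum.inr (u, i), Sum.inl w =>
    have : u = w := (CB.adj_rl G k u i w).mp hadj
    subst this
    apply Relation.ReflTransGen.single
    refine ⟨CB.restrict G k hf, CB.restrict G k hf', u, ?_, ?_⟩
    · show f (Sum.inl u) ≠ f' (Sum.inl u)
      rw [← hxy]
      exact hf.2 ((CB.adj_lr G k u u i).mpr rfl)
    · intro w' hw'
      exact hoth (Sum.inl w') (by simp) (by simpa using hw')
  | Sum.inr (u, i), Sum.inr (w, j) =>
    have heq : (fun v => f (Sum.inl v)) = (fun v => f' (Sum.inl v)) :=
      funext fun v => hoth (Sum.inl v) (by simp) (by simp)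
    rw [heq]
    exact Relation.ReflTransGen.refl

lemma CB.bwd {V : Type*} (G : SimpleGraph V) {k : ℕ} (hk : 1 ≤ k)
    {f f2 : V ⊕ V × Fin (k-1) → ℕ} (h : CSReconf (cliqueBlowup G k) k f f2) :
    SVReconf G k (fun v => f (Sum.inl v)) (fun v => f2 (Sum.inl v)) := by
  induction h with
  | refl => exact Relation.ReflTransGen.refl
  | tail hab hbc ih => exact ih.trans (CB.bwd_step G hk hbc)

/-- reduction from Coloring Reconfiguration under single-vertex
recoloring to CRCS via clique pendants. -/
theorem stmt_4 {V : Type*} [Fintype V] (G : SimpleGraph V) (k : ℕ) (hk : 1 ≤ k)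
    (gs gt : V → ℕ)
    (hgs : IsProperColoring G k gs) (hgt : IsProperColoring G k gt)
    (fs ft : V ⊕ V × Fin (k - 1) → ℕ)
    (hfs : IsProperColoring (cliqueBlowup G k) k fs)
    (hft : IsProperColoring (cliqueBlowup G k) k ft)
    (hfs1 : ∀ v : V, fs (Sum.inl v) = gs v)
    (hft1 : ∀ v : V, ft (Sum.inl v) = gt v) :
    SVReconf G k gs gt ↔ CSReconf (cliqueBlowup G k) k fs ft := by
  constructor
  · intro h
    obtain ⟨f2, hf2, he2, hcs⟩ := CB.fwd G hk h fs hfs hfs1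
    exact hcs.trans (CB.sort G hk ft hft _ f2 hf2
      (fun v => by rw [he2 v, hft1 v]) le_rfl)
  · intro h
    have hb := CB.bwd G hk h
    have e1 : (fun v => fs (Sum.inl v)) = gs := funext hfs1
    have e2 : (fun v => ft (Sum.inl v)) = gt := funext hft1
    rwa [e1, e2] at hb
end

section
/- Let G be a finite simple graph containing distinct vertices y, a, b, c with edges ya, ab, bc, cy ∈ E(G) and with N_G(a) = {y, b}, N_G(b) = {a, c}, N_G(c) = {b, y}. Let f be a proper 3-coloring of G with f(y) = f(b) and f(a) ≠ f(c). Then every proper 3-coloring g that is reconfigurable from f under color swapping satisfies g(y) = f(y), g(a) = f(a), g(b) = f(b), and g(c) = f(c); in particular, every neighbor x of y satisfies g(x) ≠ f(y). -/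
/-- rigidity of the 3-forbidden-pendant gadget. If `y, a, b, c` form
a 4-cycle with `a, b, c` having no neighbors outside the cycle, `f(y) = f(b)` and
`f(a) ≠ f(c)`, then the colors of `y, a, b, c` are fixed in every proper
3-coloring reconfigurable from `f`, and no neighbor of `y` ever gets color `f(y)`. -/
theorem stmt_5 {V : Type*} [Fintype V] (G : SimpleGraph V) (y a b c : V)
    (hya' : y ≠ a) (hyb' : y ≠ b) (hyc' : y ≠ c)
    (hab' : a ≠ b) (hac' : a ≠ c) (hbc' : b ≠ c)
    (hya : G.Adj y a) (hab : G.Adj a b) (hbc : G.Adj b c) (hcy : G.Adj c y)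
    (hNa : G.neighborSet a = {y, b})
    (hNb : G.neighborSet b = {a, c})
    (hNc : G.neighborSet c = {b, y})
    (f : V → ℕ) (hf : IsProperColoring G 3 f)
    (hyb : f y = f b) (hac : f a ≠ f c) :
    ∀ g : V → ℕ, CSReconf G 3 f g →
      g y = f y ∧ g a = f a ∧ g b = f b ∧ g c = f c ∧
        ∀ x : V, G.Adj y x → g x ≠ f y := by
  intro g hg
  have fya : f y ≠ f a := hf.2 hya
  have fcy : f c ≠ f y := hf.2 hcy
  suffices h : IsProperColoring G 3 g ∧ g y = f y ∧ g a = f a ∧ g b = f b ∧ g c = f c by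
    obtain ⟨hgp, h1, h2, h3, h4⟩ := h
    refine ⟨h1, h2, h3, h4, fun x hx hxfy => ?_⟩
    exact hgp.2 hx (by rw [h1, hxfy])
  induction hg with
  | refl => exact ⟨hf, rfl, rfl, rfl, rfl⟩
  | @tail p q hpg hstep ih =>
    obtain ⟨hpp, py, pa, pb, pc⟩ := ih
    obtain ⟨_, hq, _, u, w, huw, h1, h2, h3⟩ := hstep
    have mema : ∀ x, G.Adj a x → x = y ∨ x = b := by
      intro x hx
      have hx' : x ∈ G.neighborSet a := hx
      rw [hNa] at hx'
      simpa using hx'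
    have memb : ∀ x, G.Adj b x → x = a ∨ x = c := by
      intro x hx
      have hx' : x ∈ G.neighborSet b := hx
      rw [hNb] at hx'
      simpa using hx'
    have memc : ∀ x, G.Adj c x → x = b ∨ x = y := by
      intro x hx
      have hx' : x ∈ G.neighborSet c := hx
      rw [hNc] at hx'
      simpa using hx'
    have key : ∀ u w : V, G.Adj u w → p u = q w → p w = q u →
        (∀ x : V, x ≠ u → x ≠ w → p x = q x) → y ≠ u ∧ a ≠ u ∧ b ≠ u ∧ c ≠ u := by
      intro u w huw h1 h2 h3
      refine ⟨?_, ?_, ?_, ?_⟩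
      · rintro rfl
        by_cases hwa : w = a
        · have e1 : p b = q b := h3 b hyb'.symm (by rw [hwa]; exact hab'.symm)
          have e2 : p y = q a := hwa ▸ h1
          exact hq.2 hab (by omega)
        by_cases hwc : w = c
        · have e1 : p b = q b := h3 b hyb'.symm (by rw [hwc]; exact hbc')
          have e2 : p y = q c := hwc ▸ h1
          exact hq.2 hbc (by omega)
        have e1 : p a = q a := h3 a hya'.symm fun h => hwa h.symm
        have e2 : p c = q c := h3 c hyc'.symm fun h => hwc h.symm
        have n1 : p y ≠ p w := hpp.2 huw
        have n2 : q y ≠ q a := hq.2 hya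
        have n3 : q c ≠ q y := hq.2 hcy
        have B1 : p w ∈ Finset.Icc 1 3 := hpp.1 w
        have B2 : f y ∈ Finset.Icc 1 3 := hf.1 y
        have B3 : f a ∈ Finset.Icc 1 3 := hf.1 a
        have B4 : f c ∈ Finset.Icc 1 3 := hf.1 c
        rw [Finset.mem_Icc] at B1 B2 B3 B4
        omega
      · rintro rfl
        rcases mema w huw with hw | hw
        · have e1 : p b = q b := h3 b hab'.symm (by rw [hw]; exact hyb'.symm)
          have e2 : p y = q a := hw ▸ h2
          exact hq.2 hab (by omega)
        · have e1 : p y = q y := h3 y hya' (by rw [hw]; exact hyb')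
          have e2 : p b = q a := hw ▸ h2
          exact hq.2 hya (by omega)
      · rintro rfl
        rcases memb w huw with hw | hw
        · have e1 : p y = q y := h3 y hyb' (by rw [hw]; exact hya')
          have e2 : p b = q a := hw ▸ h1
          exact hq.2 hya (by omega)
        · have e1 : p y = q y := h3 y hyb' (by rw [hw]; exact hyc')
          have e2 : p b = q c := hw ▸ h1
          exact hq.2 hcy (by omega)
      · rintro rfl
        rcases memc w huw with hw | hw
        · have e1 : p y = q y := h3 y hyc' (by rw [hw]; exact hyb')
          have e2 : p b = q c := hw ▸ h2
          exact hq.2 hcy (by omega)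
        · have e1 : p b = q b := h3 b hbc' (by rw [hw]; exact hyb'.symm)
          have e2 : p y = q c := hw ▸ h2
          exact hq.2 hbc (by omega)
    have k1 := key u w huw h1 h2 h3
    have k2 := key w u huw.symm h2 h1 fun x hxw hxu => h3 x hxu hxw
    refine ⟨hq, ?_, ?_, ?_, ?_⟩
    · exact (h3 y k1.1 k2.1).symm.trans py
    · exact (h3 a k1.2.1 k2.2.1).symm.trans pa
    · exact (h3 b k1.2.2.1 k2.2.2.1).symm.trans pb
    · exact (h3 c k1.2.2.2 k2.2.2.2).symm.trans pc
end

section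
/- The contraction rewriting on coloring strings is confluent; more precisely, for every coloring string S, the invariant inv(S) is well-defined: if S′₁ and S′₂ are each obtained from S by a single contraction operation, then inv(S′₁) = inv(S′₂), so the value of inv(S) does not depend on the order in which contractions are applied. Equivalently, if S can be reduced by sequences of contractions to strings T₁ and T₂ to each of which no contraction applies, then either T₁ = T₂ or both T₁ and T₂ have length at most 2. -/
/-- A coloring string: a string over the alphabet `{1,2,3}` (modeled as `Fin 3`)
in which consecutive characters are distinct; it encodes a proper 3-coloring of
a path. -/
def IsColoringString (S : List (Fin 3)) : Prop := S.Chain' (· ≠ ·)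

/-- Two coloring strings are adjacent: one is obtained from the other by
exchanging a swappable pair of consecutive characters (i.e. the exchange yields
again a coloring string). -/
def StringStep (S S' : List (Fin 3)) : Prop :=
  IsColoringString S ∧ IsColoringString S' ∧
    ∃ (A B : List (Fin 3)) (a b : Fin 3),
      S = A ++ a :: b :: B ∧ S' = A ++ b :: a :: B

/-- Two coloring strings are reconfigurable: they are joined by a sequence of
coloring strings in which consecutive strings are adjacent. -/
def StringReconf : List (Fin 3) → List (Fin 3) → Prop :=
  Relation.ReflTransGen StringStep

/-- The contraction operations on coloring strings:
`C1` replaces a substring `x p q x` by `x` (here the occurrence starts at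
1-based position `i - 1` with `2 ≤ i ≤ n - 2`, i.e. `A` is an arbitrary prefix
and `B` an arbitrary suffix); `C2` deletes a pairwise-distinct first triple;
`C3` deletes a pairwise-distinct last triple. -/
inductive Contract : List (Fin 3) → List (Fin 3) → Prop
  | c1 (A B : List (Fin 3)) (x p q : Fin 3) :
      Contract (A ++ x :: p :: q :: x :: B) (A ++ x :: B)
  | c2 (p q r : Fin 3) (B : List (Fin 3)) :
      p ≠ q → q ≠ r → p ≠ r → Contract (p :: q :: r :: B) B
  | c3 (A : List (Fin 3)) (p q r : Fin 3) :
      p ≠ q → q ≠ r → p ≠ r → Contract (A ++ [p, q, r]) A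

/-- `S` reduces to `T` by a (possibly empty) sequence of contractions. -/
def ContractsTo : List (Fin 3) → List (Fin 3) → Prop :=
  Relation.ReflTransGen Contract

/-- No contraction applies to `T`. -/
def IsContractNormal (T : List (Fin 3)) : Prop := ∀ U, ¬ Contract T U

/-- `T` is the invariant `inv S` of the coloring string `S`: `S` reduces by
contractions to some string `U` to which no contraction applies, and `T = U`
if `|U| ≥ 3`, while `T` is the empty string `NIL` if `|U| ≤ 2`. -/
def InvIs (S T : List (Fin 3)) : Prop :=
  ∃ U, ContractsTo S U ∧ IsContractNormal U ∧ T = if U.length ≤ 2 then [] else U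

/-!
Whenever a coloring string contracts in two ways, the two results are equal, contract in one step
to a common string, or both have length at most 2 (a string of length 4 or 5 losing its first or
its last three letters). The overlaps of an occurrence of `x p q x` with an end triple or with
another such occurrence close because in `Fin 3` a letter distinct from two distinct letters is
determined by them. Hence, once all strings of length at most 2 are identified with `NIL`, every
peak of contractions closes with at most one step on each side, and the Church–Rosser lemma
gives confluence with no termination argument.
-/

open Relation

lemma isColoringString_iff {S : List (Fin 3)} : IsColoringString S ↔ S.IsChain (· ≠ ·) :=
  Iff.rfl

lemma fin_three_eq_of_ne {x p a q : Fin 3} (hxp : x ≠ p) (hax : a ≠ x) (hap : a ≠ p)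
    (hqx : q ≠ x) (hqp : q ≠ p) : a = q := by
  revert x p a q; decide

namespace IsColoringString

lemma reverse {S : List (Fin 3)} (hS : IsColoringString S) : IsColoringString S.reverse :=
  List.isChain_reverse.2 (hS.imp fun _ _ h => h.symm)

lemma ne_of_infix {A B : List (Fin 3)} {x p q : Fin 3}
    (hS : IsColoringString (A ++ x :: p :: q :: x :: B)) : x ≠ p ∧ p ≠ q ∧ q ≠ x := by
  have h : IsColoringString [x, p, q, x] := hS.infix ⟨A, B, by simp⟩
  simp only [isColoringString_iff, List.isChain_cons_cons, List.isChain_singleton] at h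
  exact ⟨h.1, h.2.1, h.2.2.1⟩

end IsColoringString

namespace Contract

lemma length_eq {S T : List (Fin 3)} (h : Contract S T) : S.length = T.length + 3 := by
  cases h <;> simp; omega

lemma isColoringString {S T : List (Fin 3)} (h : Contract S T) (hS : IsColoringString S) :
    IsColoringString T := by
  cases h with
  | c1 A B x p q =>
    simp only [isColoringString_iff, List.isChain_append] at hS ⊢
    exact ⟨hS.1, hS.2.1.suffix ⟨[x, p, q], rfl⟩, hS.2.2⟩
  | c2 p q r _ => exact hS.suffix ⟨[p, q, r], rfl⟩
  | c3 _ p q r => exact hS.prefix ⟨[p, q, r], rfl⟩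

lemma reverse {S T : List (Fin 3)} (h : Contract S T) : Contract S.reverse T.reverse := by
  cases h with
  | c1 A B x p q => simpa using c1 B.reverse A.reverse x q p
  | c2 p q r _ hpq hqr hpr => simpa using c3 T.reverse r q p hqr.symm hpq.symm hpr.symm
  | c3 _ p q r hpq hqr hpr => simpa using c2 r q p T.reverse hqr.symm hpq.symm hpr.symm

end Contract

lemma isContractNormal_of_length_le {T : List (Fin 3)} (h : T.length ≤ 2) :
    IsContractNormal T :=
  fun U hU => by have := hU.length_eq; omega

def OneStepJoinable (T₁ T₂ : List (Fin 3)) : Prop :=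
  T₁ = T₂ ∨ (∃ U, Contract T₁ U ∧ Contract T₂ U) ∨ (T₁.length ≤ 2 ∧ T₂.length ≤ 2)

namespace OneStepJoinable

lemma symm {T₁ T₂ : List (Fin 3)} (h : OneStepJoinable T₁ T₂) : OneStepJoinable T₂ T₁ := by
  rcases h with h | ⟨U, h₁, h₂⟩ | ⟨h₁, h₂⟩
  · exact .inl h.symm
  · exact .inr (.inl ⟨U, h₂, h₁⟩)
  · exact .inr (.inr ⟨h₂, h₁⟩)

lemma reverse {T₁ T₂ : List (Fin 3)} (h : OneStepJoinable T₁ T₂) :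
    OneStepJoinable T₁.reverse T₂.reverse := by
  rcases h with rfl | ⟨U, h₁, h₂⟩ | ⟨h₁, h₂⟩
  · exact .inl rfl
  · exact .inr (.inl ⟨U.reverse, h₁.reverse, h₂.reverse⟩)
  · exact .inr (.inr ⟨by simpa using h₁, by simpa using h₂⟩)

end OneStepJoinable

lemma oneStepJoinable_c2_c3 {B A : List (Fin 3)} {p q r p' q' r' : Fin 3}
    (hpq : p ≠ q) (hqr : q ≠ r) (hpr : p ≠ r)
    (hpq' : p' ≠ q') (hqr' : q' ≠ r') (hpr' : p' ≠ r')
    (heq : p :: q :: r :: B = A ++ [p', q', r']) : OneStepJoinable B A := by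
  rcases A with _ | ⟨a, _ | ⟨b, _ | ⟨c, A⟩⟩⟩ <;> simp only [List.nil_append, List.cons_append,
    List.cons.injEq] at heq <;> obtain ⟨rfl, rfl, rfl, rfl⟩ := heq
  · exact .inl rfl
  · exact .inr (.inr ⟨by simp, by simp⟩)
  · exact .inr (.inr ⟨by simp, by simp⟩)
  · exact .inr (.inl ⟨A, .c3 A p' q' r' hpq' hqr' hpr', .c2 p q r A hpq hqr hpr⟩)

lemma oneStepJoinable_c1_c2 {A B B' : List (Fin 3)} {x p q p' q' r' : Fin 3}
    (hS : IsColoringString (A ++ x :: p :: q :: x :: B))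
    (hpq' : p' ≠ q') (hqr' : q' ≠ r') (hpr' : p' ≠ r')
    (heq : A ++ x :: p :: q :: x :: B = p' :: q' :: r' :: B') :
    OneStepJoinable (A ++ x :: B) B' := by
  obtain ⟨hxp, hpq, hqx⟩ := hS.ne_of_infix
  rcases A with _ | ⟨a, _ | ⟨b, _ | ⟨c, A⟩⟩⟩ <;> simp only [List.nil_append, List.cons_append,
    List.cons.injEq] at heq <;> obtain ⟨rfl, rfl, rfl, rfl⟩ := heq
  · exact .inl rfl
  · obtain rfl : a = q := fin_three_eq_of_ne hxp hpq' hpr' hqx hpq.symm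
    exact .inl rfl
  · exact .inr (.inl ⟨B, .c2 a b x B hpq' hqr' hpr', .c2 p q x B hpq hqx hxp.symm⟩)
  · exact .inr (.inl ⟨A ++ x :: B, .c2 a b c _ hpq' hqr' hpr', .c1 A B x p q⟩)

lemma oneStepJoinable_c1_c3 {A B A' : List (Fin 3)} {x p q p' q' r' : Fin 3}
    (hS : IsColoringString (A ++ x :: p :: q :: x :: B))
    (hpq' : p' ≠ q') (hqr' : q' ≠ r') (hpr' : p' ≠ r')
    (heq : A ++ x :: p :: q :: x :: B = A' ++ [p', q', r']) :
    OneStepJoinable (A ++ x :: B) A' := by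
  have := oneStepJoinable_c1_c2 (p := q) (q := p) (p' := r') (q' := q') (r' := p')
    (by simpa using hS.reverse) hqr'.symm hpq'.symm hpr'.symm
    (by simpa using congrArg List.reverse heq)
  simpa using this.reverse

lemma oneStepJoinable_c1_c1_of_append {A B₁ B₂ C : List (Fin 3)} {x₁ p₁ q₁ x₂ p₂ q₂ : Fin 3}
    (hS : IsColoringString (A ++ x₁ :: p₁ :: q₁ :: x₁ :: B₁))
    (heq : x₁ :: p₁ :: q₁ :: x₁ :: B₁ = C ++ x₂ :: p₂ :: q₂ :: x₂ :: B₂) :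
    OneStepJoinable (A ++ x₁ :: B₁) ((A ++ C) ++ x₂ :: B₂) := by
  obtain ⟨hxp₁, hpq₁, hqx₁⟩ := hS.ne_of_infix
  obtain ⟨hxp₂, hpq₂, hqx₂⟩ : x₂ ≠ p₂ ∧ p₂ ≠ q₂ ∧ q₂ ≠ x₂ := by
    rw [heq, ← List.append_assoc] at hS
    exact hS.ne_of_infix
  -- `C` is the offset of the second occurrence: at offsets 1 and 2 both contractions give the same
  -- string, at offset 3 the occurrences share a letter, from offset 4 on they are disjoint.
  rcases C with _ | ⟨c, _ | ⟨d, _ | ⟨e, _ | ⟨f, C⟩⟩⟩⟩ <;> simp only [List.nil_append,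
    List.cons_append, List.cons.injEq] at heq
  · obtain ⟨rfl, rfl, rfl, -, rfl⟩ := heq
    exact .inl (by simp)
  · obtain ⟨rfl, rfl, rfl, rfl, rfl⟩ := heq
    exact .inl (by simp)
  · obtain ⟨rfl, rfl, rfl, rfl, rfl⟩ := heq
    obtain rfl : q₂ = p₁ := fin_three_eq_of_ne hqx₁.symm hpq₂.symm hqx₂ hxp₁.symm hpq₁
    exact .inl (by simp)
  · obtain ⟨rfl, rfl, rfl, rfl, rfl⟩ := heq
    exact .inr (.inl ⟨A ++ x₁ :: B₂, .c1 A B₂ x₁ p₂ q₂, by simpa using .c1 A B₂ x₁ p₁ q₁⟩)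
  · obtain ⟨rfl, rfl, rfl, rfl, rfl⟩ := heq
    refine .inr (.inl ⟨A ++ x₁ :: (C ++ x₂ :: B₂), ?_, ?_⟩)
    · simpa using Contract.c1 (A ++ x₁ :: C) B₂ x₂ p₂ q₂
    · simpa using Contract.c1 A (C ++ x₂ :: B₂) x₁ p₁ q₁

lemma oneStepJoinable_c1_c1 {A₁ B₁ A₂ B₂ : List (Fin 3)} {x₁ p₁ q₁ x₂ p₂ q₂ : Fin 3}
    (hS : IsColoringString (A₁ ++ x₁ :: p₁ :: q₁ :: x₁ :: B₁))
    (heq : A₁ ++ x₁ :: p₁ :: q₁ :: x₁ :: B₁ = A₂ ++ x₂ :: p₂ :: q₂ :: x₂ :: B₂) :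
    OneStepJoinable (A₁ ++ x₁ :: B₁) (A₂ ++ x₂ :: B₂) := by
  rcases List.append_eq_append_iff.1 heq with ⟨C, rfl, hC⟩ | ⟨C, rfl, hC⟩
  · exact oneStepJoinable_c1_c1_of_append hS hC
  · exact (oneStepJoinable_c1_c1_of_append (heq ▸ hS) hC).symm

theorem oneStepJoinable_of_contract {S T₁ T₂ : List (Fin 3)} (hS : IsColoringString S)
    (h₁ : Contract S T₁) (h₂ : Contract S T₂) : OneStepJoinable T₁ T₂ := by
  generalize heq : S = S' at h₂
  rcases h₁ with ⟨A₁, B₁, x₁, p₁, q₁⟩ | ⟨p₁, q₁, r₁, _, hpq₁, hqr₁, hpr₁⟩ |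
      ⟨_, p₁, q₁, r₁, hpq₁, hqr₁, hpr₁⟩ <;>
    rcases h₂ with ⟨A₂, B₂, x₂, p₂, q₂⟩ | ⟨p₂, q₂, r₂, _, hpq₂, hqr₂, hpr₂⟩ |
      ⟨_, p₂, q₂, r₂, hpq₂, hqr₂, hpr₂⟩
  · exact oneStepJoinable_c1_c1 hS heq
  · exact oneStepJoinable_c1_c2 hS hpq₂ hqr₂ hpr₂ heq
  · exact oneStepJoinable_c1_c3 hS hpq₂ hqr₂ hpr₂ heq
  · exact (oneStepJoinable_c1_c2 (heq ▸ hS) hpq₁ hqr₁ hpr₁ heq.symm).symm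
  · simp only [List.cons.injEq] at heq
    exact .inl heq.2.2.2
  · exact oneStepJoinable_c2_c3 hpq₁ hqr₁ hpr₁ hpq₂ hqr₂ hpr₂ heq
  · exact (oneStepJoinable_c1_c3 (heq ▸ hS) hpq₁ hqr₁ hpr₁ heq.symm).symm
  · exact (oneStepJoinable_c2_c3 hpq₂ hqr₂ hpr₂ hpq₁ hqr₁ hpr₁ heq.symm).symm
  · exact .inl (List.append_inj' heq rfl).1

def collapseShort (T : List (Fin 3)) : List (Fin 3) := if T.length ≤ 2 then [] else T

lemma collapseShort_of_contract {S T : List (Fin 3)} (h : Contract S T) :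
    collapseShort S = S :=
  if_neg (by have := h.length_eq; omega)

lemma eq_or_length_le_of_collapseShort_eq {T₁ T₂ : List (Fin 3)}
    (h : collapseShort T₁ = collapseShort T₂) : T₁ = T₂ ∨ (T₁.length ≤ 2 ∧ T₂.length ≤ 2) := by
  unfold collapseShort at h
  split_ifs at h with h₁ h₂ h₂
  · exact .inr ⟨h₁, h₂⟩
  · subst h; simp at h₂
  · subst h; simp at h₁
  · exact .inl h

def CollapsedContract (S T : List (Fin 3)) : Prop :=
  IsColoringString S ∧ ∃ U, Contract S U ∧ T = collapseShort U

lemma collapsedContract_diamond (S T₁ T₂ : List (Fin 3)) (h₁ : CollapsedContract S T₁)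
    (h₂ : CollapsedContract S T₂) :
    ∃ U, ReflGen CollapsedContract T₁ U ∧ ReflTransGen CollapsedContract T₂ U := by
  obtain ⟨hS, U₁, hU₁, rfl⟩ := h₁
  obtain ⟨-, U₂, hU₂, rfl⟩ := h₂
  rcases oneStepJoinable_of_contract hS hU₁ hU₂ with rfl | ⟨V, hV₁, hV₂⟩ | ⟨h₁, h₂⟩
  · exact ⟨_, .refl, .refl⟩
  · rw [collapseShort_of_contract hV₁, collapseShort_of_contract hV₂]
    exact ⟨_, .single ⟨hU₁.isColoringString hS, V, hV₁, rfl⟩,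
      .single ⟨hU₂.isColoringString hS, V, hV₂, rfl⟩⟩
  · simp only [collapseShort, if_pos h₁, if_pos h₂]
    exact ⟨_, .refl, .refl⟩

lemma ContractsTo.reflTransGen_collapsedContract {S T : List (Fin 3)} (hS : IsColoringString S)
    (h : ContractsTo S T) : ReflTransGen CollapsedContract (collapseShort S) (collapseShort T) := by
  induction h using ReflTransGen.head_induction_on with
  | refl => exact .refl
  | head hSU _ ih =>
    rw [collapseShort_of_contract hSU]
    exact .head ⟨hS, _, hSU, rfl⟩ (ih (hSU.isColoringString hS))

lemma IsContractNormal.not_collapsedContract {T : List (Fin 3)} (h : IsContractNormal T)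
    (U : List (Fin 3)) : ¬ CollapsedContract (collapseShort T) U := by
  rintro ⟨-, V, hV, -⟩
  unfold collapseShort at hV
  split_ifs at hV
  · exact isContractNormal_of_length_le (by simp) V hV
  · exact h V hV

/-- the contraction rewriting is confluent, so `inv` is
well-defined: if a coloring string `S` reduces by contractions to strings `T₁`
and `T₂` to which no contraction applies, then `T₁ = T₂` or both have length at
most 2 (in which case both give `inv S = NIL`). -/
theorem stmt_7 (S T₁ T₂ : List (Fin 3)) (hS : IsColoringString S)
    (h1 : ContractsTo S T₁) (h1n : IsContractNormal T₁)
    (h2 : ContractsTo S T₂) (h2n : IsContractNormal T₂) :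
    T₁ = T₂ ∨ (T₁.length ≤ 2 ∧ T₂.length ≤ 2) := by
  obtain ⟨U, hU₁, hU₂⟩ := church_rosser collapsedContract_diamond
    (h1.reflTransGen_collapsedContract hS) (h2.reflTransGen_collapsedContract hS)
  apply eq_or_length_le_of_collapseShort_eq
  exact ((reflTransGen_iff_eq h1n.not_collapsedContract).1 hU₁).symm.trans
    ((reflTransGen_iff_eq h2n.not_collapsedContract).1 hU₂)
end

section
/- Let S and S′ be coloring strings that are adjacent, i.e., S′ is obtained from S by exchanging one swappable pair of consecutive characters. Then inv(S) = inv(S′). -/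
/-!
A swappable pair `ab` can always be contracted away together with one neighbour, and the
contraction does not see the order of `a` and `b`. At the front, `a b y` are pairwise distinct
in both strings, so (C2) deletes them; at the back (C3) does the same. In the middle, the left
neighbour `x` and the right neighbour `y` both differ from `a` and from `b`, hence are the same
third colour, and (C1) turns both `x a b x` and `x b a x` into `x`. So the two strings contract
to a common string, and any normal form of it is an invariant of both. If the pair is the whole
string, both strings are already normal and have invariant `NIL`.
-/

lemma Contract.length_eq_s8 {S U : List (Fin 3)} (h : Contract S U) :
    S.length = U.length + 3 := by
  cases h <;> simp +arith

lemma isContractNormal_of_length_lt {S : List (Fin 3)} (h : S.length < 3) :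
    IsContractNormal S :=
  fun _ hU => by have := hU.length_eq_s8; omega

lemma exists_contractsTo_isContractNormal (S : List (Fin 3)) :
    ∃ U, ContractsTo S U ∧ IsContractNormal U := by
  by_cases h : ∃ V, Contract S V
  · obtain ⟨V, hV⟩ := h
    have : V.length < S.length := by have := hV.length_eq_s8; omega
    obtain ⟨U, hVU, hU⟩ := exists_contractsTo_isContractNormal V
    exact ⟨U, .head hV hVU, hU⟩
  · exact ⟨S, .refl, fun U hU => h ⟨U, hU⟩⟩
termination_by S.length

lemma exists_invIs_of_contract {S S' C : List (Fin 3)} (h : Contract S C)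
    (h' : Contract S' C) : ∃ T, InvIs S T ∧ InvIs S' T := by
  obtain ⟨U, hCU, hU⟩ := exists_contractsTo_isContractNormal C
  exact ⟨_, ⟨U, .head h hCU, hU, rfl⟩, ⟨U, .head h' hCU, hU, rfl⟩⟩

lemma fin_three_eq_of_ne_of_ne {a b x y : Fin 3} (hab : a ≠ b) (hxa : x ≠ a) (hxb : x ≠ b)
    (hya : y ≠ a) (hyb : y ≠ b) : x = y := by
  revert a b x y; decide

lemma isColoringString_cons_cons {a b : Fin 3} {L : List (Fin 3)} :
    IsColoringString (a :: b :: L) ↔ a ≠ b ∧ IsColoringString (b :: L) :=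
  List.isChain_cons_cons

lemma IsColoringString.of_append {A L : List (Fin 3)} (h : IsColoringString (A ++ L)) :
    IsColoringString L :=
  List.IsChain.right_of_append h

lemma contract_swap_head {a b y : Fin 3} {B : List (Fin 3)}
    (hS : IsColoringString (a :: b :: y :: B)) (hS' : IsColoringString (b :: a :: y :: B)) :
    Contract (a :: b :: y :: B) B ∧ Contract (b :: a :: y :: B) B := by
  simp only [isColoringString_cons_cons] at hS hS'
  obtain ⟨hab, hby, -⟩ := hS
  obtain ⟨hba, hay, -⟩ := hS'
  exact ⟨.c2 a b y B hab hby hay, .c2 b a y B hba hay hby⟩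

lemma contract_swap_last {x a b : Fin 3} {A : List (Fin 3)}
    (hS : IsColoringString (A ++ [x, a, b])) (hS' : IsColoringString (A ++ [x, b, a])) :
    Contract (A ++ [x, a, b]) A ∧ Contract (A ++ [x, b, a]) A := by
  have h := hS.of_append
  have h' := hS'.of_append
  simp only [isColoringString_cons_cons] at h h'
  obtain ⟨hxa, hab, -⟩ := h
  obtain ⟨hxb, hba, -⟩ := h'
  exact ⟨.c3 A x a b hxa hab hxb, .c3 A x b a hxb hba hxa⟩

lemma contract_swap_middle {x a b y : Fin 3} {A B : List (Fin 3)}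
    (hS : IsColoringString (A ++ x :: a :: b :: y :: B))
    (hS' : IsColoringString (A ++ x :: b :: a :: y :: B)) :
    Contract (A ++ x :: a :: b :: y :: B) (A ++ x :: B) ∧
      Contract (A ++ x :: b :: a :: y :: B) (A ++ x :: B) := by
  have h := hS.of_append
  have h' := hS'.of_append
  simp only [isColoringString_cons_cons] at h h'
  obtain ⟨hxa, hab, hby, -⟩ := h
  obtain ⟨hxb, -, hay, -⟩ := h'
  obtain rfl : x = y := fin_three_eq_of_ne_of_ne hab hxa hxb hay.symm hby.symm
  exact ⟨.c1 A B x a b, .c1 A B x b a⟩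

/-- adjacent coloring strings (one obtained from the other by
exchanging a swappable pair of consecutive characters) have the same invariant:
`inv S = inv S'`. -/
theorem stmt_8 (S S' : List (Fin 3)) (h : StringStep S S') :
    ∃ T, InvIs S T ∧ InvIs S' T := by
  obtain ⟨hS, hS', A, B, a, b, rfl, rfl⟩ := h
  rcases A.eq_nil_or_concat with rfl | ⟨A, x, rfl⟩ <;> rcases B with _ | ⟨y, B⟩
  · have hnormal {c d : Fin 3} : IsContractNormal [c, d] := isContractNormal_of_length_lt (by simp)
    exact ⟨[], ⟨_, .refl, hnormal, rfl⟩, ⟨_, .refl, hnormal, rfl⟩⟩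
  · exact (contract_swap_head hS hS').elim exists_invIs_of_contract
  all_goals
    simp only [List.concat_eq_append, List.append_assoc, List.singleton_append] at hS hS' ⊢
  · exact (contract_swap_last hS hS').elim exists_invIs_of_contract
  · exact (contract_swap_middle hS hS').elim exists_invIs_of_contract
end

section
/- Let S be a coloring string of length at least 3 that is not rigid (i.e., some pair of consecutive characters of S is swappable). Then there exists a coloring string S′ such that the first three characters S′[1], S′[2], S′[3] are pairwise distinct and S and S′ are reconfigurable. -/
theorem Fin.eq_or_eq_of_ne_of_ne_of_ne {a b c d : Fin 3} (hab : a ≠ b) (hca : c ≠ a)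
    (hcb : c ≠ b) (hdc : d ≠ c) : d = a ∨ d = b := by
  omega

namespace IsColoringString

theorem cons_cons {a b : Fin 3} {l : List (Fin 3)} :
    IsColoringString (a :: b :: l) ↔ a ≠ b ∧ IsColoringString (b :: l) :=
  List.isChain_cons_cons

theorem of_append_s9 {C L : List (Fin 3)} (h : IsColoringString (C ++ L)) : IsColoringString L :=
  List.IsChain.right_of_append h

theorem append_cons_of_cons {C L M : List (Fin 3)} {x : Fin 3}
    (h : IsColoringString (C ++ x :: L)) (h' : IsColoringString (x :: M)) :
    IsColoringString (C ++ x :: M) := by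
  obtain ⟨hC, -, hlink⟩ := List.isChain_append.mp h
  exact hC.append h' hlink

end IsColoringString

def StartsRainbow (S : List (Fin 3)) : Prop :=
  ∃ x y z T, S = x :: y :: z :: T ∧ x ≠ y ∧ y ≠ z ∧ x ≠ z

theorem exists_reconf_startsRainbow_of_swap (A : List (Fin 3)) {a b : Fin 3} {B : List (Fin 3)}
    (hS : IsColoringString (A ++ a :: b :: B)) (hswap : IsColoringString (A ++ b :: a :: B))
    (hlen : 3 ≤ (A ++ a :: b :: B).length) :
    ∃ S', StringReconf (A ++ a :: b :: B) S' ∧ StartsRainbow S' := by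
  induction A using List.reverseRecOn generalizing a b B with
  | nil =>
    obtain ⟨c, B, rfl⟩ : ∃ c B', B = c :: B' :=
      List.exists_cons_of_length_pos (by simp at hlen; omega)
    simp only [List.nil_append, IsColoringString.cons_cons] at hS hswap
    exact ⟨_, .refl, a, b, c, B, rfl, hS.1, hS.2.1, hswap.2.1⟩
  | append_singleton A q ih =>
    simp only [List.append_assoc, List.cons_append, List.nil_append] at hS hswap ⊢
    rcases A.eq_nil_or_concat' with rfl | ⟨C, p, rfl⟩
    · simp only [List.nil_append, IsColoringString.cons_cons] at hS hswap
      exact ⟨_, .refl, q, a, b, B, rfl, hS.1, hS.2.1, hswap.1⟩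
    simp only [List.append_assoc, List.cons_append, List.nil_append] at hS hswap ih ⊢
    have htail := hS.of_append_s9
    have hswap_tail := hswap.of_append_s9
    simp only [IsColoringString.cons_cons] at htail hswap_tail
    obtain ⟨hpq, hqa, hab, hbB⟩ := htail
    obtain ⟨-, hqb, -, haB⟩ := hswap_tail
    rcases Fin.eq_or_eq_of_ne_of_ne_of_ne hab hqa hqb hpq with rfl | rfl
    · -- `p = a`
      have hswap₂ : IsColoringString (C ++ p :: b :: q :: p :: B) :=
        hswap.append_cons_of_cons <| by
          simp only [IsColoringString.cons_cons]; exact ⟨hab, hqb.symm, hqa, haB⟩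
      obtain ⟨S', hreconf, hrainbow⟩ := ih hswap hswap₂ (by simpa using hlen)
      have hstep : StringStep (C ++ p :: q :: p :: b :: B) (C ++ p :: q :: b :: p :: B) :=
        ⟨hS, hswap, C ++ [p, q], B, p, b, by simp, by simp⟩
      exact ⟨S', hreconf.head hstep, hrainbow⟩
    · -- `p = b`
      refine ih hS (hS.append_cons_of_cons ?_) (by simpa using hlen)
      simp only [IsColoringString.cons_cons]; exact ⟨hab.symm, hqa.symm, hqb, hbB⟩

theorem stmt_9_general (S : List (Fin 3)) (hn : 3 ≤ S.length)
    (hnonrigid : ∃ S'', StringStep S S'') :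
    ∃ S' : List (Fin 3), StringReconf S S' ∧
      S'.getD 0 0 ≠ S'.getD 1 0 ∧ S'.getD 1 0 ≠ S'.getD 2 0 ∧
      S'.getD 0 0 ≠ S'.getD 2 0 := by
  obtain ⟨_, hS, hswap, A, B, a, b, rfl, rfl⟩ := hnonrigid
  obtain ⟨S', hreconf, x, y, z, T, rfl, hxy, hyz, hxz⟩ :=
    exists_reconf_startsRainbow_of_swap A hS hswap hn
  exact ⟨_, hreconf, hxy, hyz, hxz⟩

/-- a non-rigid coloring string of length at least 3 is
reconfigurable to a coloring string whose first three characters are pairwise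
distinct. -/
theorem stmt_9 (S : List (Fin 3)) (hS : IsColoringString S) (hn : 3 ≤ S.length)
    (hnonrigid : ∃ S'', StringStep S S'') :
    ∃ S' : List (Fin 3), StringReconf S S' ∧
      S'.getD 0 0 ≠ S'.getD 1 0 ∧ S'.getD 1 0 ≠ S'.getD 2 0 ∧
      S'.getD 0 0 ≠ S'.getD 2 0 :=
  stmt_9_general S hn hnonrigid
end

section
/- Let S and S′ be coloring strings, and let (w₁, w₂, w₃) and (w₁′, w₂′, w₃′) be triples of pairwise distinct characters from {1,2,3} such that the concatenations w₁w₂w₃S and w₁′w₂′w₃′S′ are again coloring strings. If S and S′ are reconfigurable, then w₁w₂w₃S and w₁′w₂′w₃′S′ are also reconfigurable. -/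
abbrev Triple := Fin 3 × Fin 3 × Fin 3

def cons3 (p : Triple) (T : List (Fin 3)) : List (Fin 3) :=
  p.1 :: p.2.1 :: p.2.2 :: T

/-- `p` is a permutation of `123` that may precede a string with head `t`. -/
def IsPermPrefix (t : Option (Fin 3)) (p : Triple) : Prop :=
  p.1 ≠ p.2.1 ∧ p.2.1 ≠ p.2.2 ∧ p.1 ≠ p.2.2 ∧ t ≠ some p.2.2

instance (t : Option (Fin 3)) (p : Triple) : Decidable (IsPermPrefix t p) := by
  unfold IsPermPrefix; infer_instance

def PrefixSwap (t : Option (Fin 3)) (p q : Triple) : Prop :=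
  IsPermPrefix t p ∧ IsPermPrefix t q ∧
    (q = (p.2.1, p.1, p.2.2) ∨ q = (p.1, p.2.2, p.2.1))

instance (t : Option (Fin 3)) (p q : Triple) : Decidable (PrefixSwap t p q) := by
  unfold PrefixSwap; infer_instance

set_option synthInstance.maxSize 512 in
theorem exists_prefixSwap_path : ∀ (t : Option (Fin 3)) (p q : Triple),
    IsPermPrefix t p → IsPermPrefix t q →
      ∃ r s : Triple, (p = r ∨ PrefixSwap t p r) ∧ (r = s ∨ PrefixSwap t r s) ∧
        (s = q ∨ PrefixSwap t s q) := by
  decide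

theorem exists_isPermPrefix_both : ∀ t t' : Option (Fin 3),
    ∃ p : Triple, IsPermPrefix t p ∧ IsPermPrefix t' p := by
  decide

theorem isColoringString_cons3_iff (p : Triple) (T : List (Fin 3)) :
    IsColoringString (cons3 p T) ↔
      p.1 ≠ p.2.1 ∧ p.2.1 ≠ p.2.2 ∧ T.head? ≠ some p.2.2 ∧ IsColoringString T := by
  cases T <;> simp [IsColoringString, cons3, List.Chain', List.isChain_cons_cons, eq_comm]

theorem IsPermPrefix.isColoringString_cons3 {p : Triple} {T : List (Fin 3)}
    (hp : IsPermPrefix T.head? p) (hT : IsColoringString T) :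
    IsColoringString (cons3 p T) :=
  (isColoringString_cons3_iff p T).2 ⟨hp.1, hp.2.1, hp.2.2.2, hT⟩

theorem IsColoringString.isPermPrefix {p : Triple} {T : List (Fin 3)}
    (h : IsColoringString (cons3 p T)) (h13 : p.1 ≠ p.2.2) : IsPermPrefix T.head? p :=
  have h := (isColoringString_cons3_iff p T).1 h
  ⟨h.1, h.2.1, h13, h.2.2.1⟩

theorem IsColoringString.of_cons3 {p : Triple} {T : List (Fin 3)}
    (h : IsColoringString (cons3 p T)) : IsColoringString T :=
  ((isColoringString_cons3_iff p T).1 h).2.2.2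

theorem StringStep.append_left {T U : List (Fin 3)} (P : List (Fin 3)) (h : StringStep T U)
    (hT : IsColoringString (P ++ T)) (hU : IsColoringString (P ++ U)) :
    StringStep (P ++ T) (P ++ U) := by
  obtain ⟨-, -, A, B, a, b, rfl, rfl⟩ := h
  exact ⟨hT, hU, P ++ A, B, a, b, by simp, by simp⟩

theorem PrefixSwap.stringStep {T : List (Fin 3)} (hT : IsColoringString T) {p q : Triple}
    (h : PrefixSwap T.head? p q) : StringStep (cons3 p T) (cons3 q T) := by
  obtain ⟨hp, hq, hswap⟩ := h
  refine ⟨hp.isColoringString_cons3 hT, hq.isColoringString_cons3 hT, ?_⟩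
  rcases hswap with rfl | rfl
  exacts [⟨[], p.2.2 :: T, p.1, p.2.1, rfl, rfl⟩, ⟨[p.1], T, p.2.1, p.2.2, rfl, rfl⟩]

theorem stringReconf_cons3_of_isPermPrefix {T : List (Fin 3)} (hT : IsColoringString T)
    {p q : Triple} (hp : IsPermPrefix T.head? p) (hq : IsPermPrefix T.head? q) :
    StringReconf (cons3 p T) (cons3 q T) := by
  have lift : ∀ {r s : Triple}, r = s ∨ PrefixSwap T.head? r s →
      StringReconf (cons3 r T) (cons3 s T) := by
    rintro r s (rfl | hrs)
    exacts [.refl, .single (hrs.stringStep hT)]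
  obtain ⟨r, s, hpr, hrs, hsq⟩ := exists_prefixSwap_path T.head? p q hp hq
  exact ((lift hpr).trans (lift hrs)).trans (lift hsq)

theorem StringReconf.cons3_of_isPermPrefix {S T : List (Fin 3)} (h : StringReconf S T)
    (hS : IsColoringString S) {p q : Triple} (hp : IsPermPrefix S.head? p)
    (hq : IsPermPrefix T.head? q) :
    StringReconf (cons3 p S) (cons3 q T) := by
  induction h generalizing q with
  | refl => exact stringReconf_cons3_of_isPermPrefix hS hp hq
  | @tail T U _ hTU ih =>
    obtain ⟨r, hrT, hrU⟩ := exists_isPermPrefix_both T.head? U.head?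
    have hU : IsColoringString U := hTU.2.1
    have lift : StringStep (cons3 r T) (cons3 r U) :=
      hTU.append_left [r.1, r.2.1, r.2.2] (hrT.isColoringString_cons3 hTU.1)
        (hrU.isColoringString_cons3 hU)
    exact ((ih hrT).tail lift).trans (stringReconf_cons3_of_isPermPrefix hU hrU hq)

theorem stmt_10_general (S S' : List (Fin 3)) (w₁ w₂ w₃ w₁' w₂' w₃' : Fin 3)
    (hw13 : w₁ ≠ w₃) (hw13' : w₁' ≠ w₃')
    (hS : IsColoringString (w₁ :: w₂ :: w₃ :: S))
    (hS' : IsColoringString (w₁' :: w₂' :: w₃' :: S'))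
    (h : StringReconf S S') :
    StringReconf (w₁ :: w₂ :: w₃ :: S) (w₁' :: w₂' :: w₃' :: S') :=
  h.cons3_of_isPermPrefix (IsColoringString.of_cons3 (p := (w₁, w₂, w₃)) hS)
    (IsColoringString.isPermPrefix (p := (w₁, w₂, w₃)) hS hw13)
    (IsColoringString.isPermPrefix (p := (w₁', w₂', w₃')) hS' hw13')

/-- prepending pairwise-distinct triples preserves
reconfigurability of coloring strings. -/
theorem stmt_10 (S S' : List (Fin 3)) (w₁ w₂ w₃ w₁' w₂' w₃' : Fin 3)
    (hw12 : w₁ ≠ w₂) (hw23 : w₂ ≠ w₃) (hw13 : w₁ ≠ w₃)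
    (hw12' : w₁' ≠ w₂') (hw23' : w₂' ≠ w₃') (hw13' : w₁' ≠ w₃')
    (hS : IsColoringString (w₁ :: w₂ :: w₃ :: S))
    (hS' : IsColoringString (w₁' :: w₂' :: w₃' :: S'))
    (h : StringReconf S S') :
    StringReconf (w₁ :: w₂ :: w₃ :: S) (w₁' :: w₂' :: w₃' :: S') :=
  stmt_10_general S S' w₁ w₂ w₃ w₁' w₂' w₃' hw13 hw13' hS hS' h
end

section
/- Let G = G₁ ⊗ G₂ be the join of two finite simple graphs, let k be a positive integer, and let f_s, f_t be extended k-colorings of G that are reconfigurable under color swapping. If the set of swappable colors of the restriction f_s¹ of f_s to V(G₁) is empty, or the set of swappable colors of the restriction f_s² of f_s to V(G₂) is empty, then in every reconfiguration sequence from f_s to f_t no color swap is performed on an edge joining a vertex of V(G₁) to a vertex of V(G₂). -/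
/-- An extended `k`-coloring of `G`: a map `V → {1,…,k} ∪ {∗}` (with `∗ = none`)
such that adjacent vertices get different colors unless both get `∗`. -/
def IsExtColoring {V : Type*} (G : SimpleGraph V) (k : ℕ) (f : V → Option ℕ) : Prop :=
  (∀ v i, f v = some i → i ∈ Finset.Icc 1 k) ∧
    ∀ ⦃u w : V⦄, G.Adj u w → f u = f w → f u = none

/-- Two extended colorings are adjacent under color swapping: there is an edge
`uw` whose endpoint colors are exchanged, all other vertices keep their color,
and the two colorings are distinct. -/
def ExtCSAdj {V : Type*} (G : SimpleGraph V) (f f' : V → Option ℕ) : Prop :=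
  f ≠ f' ∧ ∃ u w : V, G.Adj u w ∧ f u = f' w ∧ f w = f' u ∧
    ∀ x : V, x ≠ u → x ≠ w → f x = f' x

/-- One step of color-swapping reconfiguration between extended `k`-colorings. -/
def ExtCSStep {V : Type*} (G : SimpleGraph V) (k : ℕ) (f f' : V → Option ℕ) : Prop :=
  IsExtColoring G k f ∧ IsExtColoring G k f' ∧ ExtCSAdj G f f'

/-- Two extended `k`-colorings are reconfigurable under color swapping. -/
def ExtReconf {V : Type*} (G : SimpleGraph V) (k : ℕ) :
    (V → Option ℕ) → (V → Option ℕ) → Prop :=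
  Relation.ReflTransGen (ExtCSStep G k)

/-- The set of swappable colors of an extended coloring `f`: the colors used by
exactly one vertex, together with `∗` whenever some vertex is colored `∗`. -/
def swappableSet {V : Type*} (f : V → Option ℕ) : Set (Option ℕ) :=
  {c | (∃! v, f v = c) ∨ (c = none ∧ ∃ v, f v = none)}

/-- The disjoint union `G₁ ⊕ G₂`. -/
def graphSum {V₁ V₂ : Type*} (G₁ : SimpleGraph V₁) (G₂ : SimpleGraph V₂) :
    SimpleGraph (V₁ ⊕ V₂) :=
  SimpleGraph.fromRel (fun x y =>
    match x, y with
    | Sum.inl u, Sum.inl v => G₁.Adj u v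
    | Sum.inr u, Sum.inr v => G₂.Adj u v
    | _, _ => False)

/-- The join `G₁ ⊗ G₂`: the disjoint union together with all edges between the
two sides. -/
def graphJoin {V₁ V₂ : Type*} (G₁ : SimpleGraph V₁) (G₂ : SimpleGraph V₂) :
    SimpleGraph (V₁ ⊕ V₂) :=
  SimpleGraph.fromRel (fun x y =>
    match x, y with
    | Sum.inl u, Sum.inl v => G₁.Adj u v
    | Sum.inr u, Sum.inr v => G₂.Adj u v
    | Sum.inl _, Sum.inr _ => True
    | Sum.inr _, Sum.inl _ => False)

/-- `l` is a reconfiguration sequence of extended `k`-colorings of `G` from `f`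
to `f'`. -/
def IsReconfSeq {V : Type*} (G : SimpleGraph V) (k : ℕ)
    (l : List (V → Option ℕ)) (f f' : V → Option ℕ) : Prop :=
  l.head? = some f ∧ l.getLast? = some f' ∧
    (∀ g ∈ l, IsExtColoring G k g) ∧ l.Chain' (ExtCSAdj G)

/-!
A cross swap on `G₁ ⊗ G₂` moves the color `c` of some `x ∈ V(G₁)` onto a vertex
`y ∈ V(G₂)`. If the swappable set of the `G₁`-side is empty, then `c ≠ ∗` and `c` is also used
by a second vertex of `G₁`, which stays put and is adjacent to `y`: the result is not an
extended coloring. Swaps inside one side merely permute, or do not touch, the colors of that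
side, so the emptiness of its swappable set propagates along any reconfiguration sequence.
-/

theorem swappableSet_comp_perm {V : Type*} (f : V → Option ℕ) (σ : Equiv.Perm V) :
    swappableSet (f ∘ σ) = swappableSet f := by
  ext c
  simp only [swappableSet, Set.mem_ofPred_eq, Function.comp_apply]
  exact or_congr (σ.existsUnique_congr_right (q := (f · = c)))
    (and_congr_right fun _ => σ.exists_congr_right (q := (f · = none)))

theorem swappableSet_eq_empty_iff {V : Type*} {f : V → Option ℕ} :
    swappableSet f = ∅ ↔ ∀ v, f v ≠ none ∧ ∃ w ≠ v, f w = f v := by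
  simp only [Set.eq_empty_iff_forall_notMem, swappableSet, Set.mem_ofPred_eq, not_or, not_and,
    not_exists]
  constructor
  · intro h v
    refine ⟨fun hv => (h _).2 hv v hv, ?_⟩
    by_contra! hne
    exact (h (f v)).1 ⟨v, rfl, fun w hw => by_contra fun h' => hne w h' hw⟩
  · rintro h c
    refine ⟨fun ⟨v, hv, huniq⟩ => ?_, fun _ v hv => (h v).1 hv⟩
    obtain ⟨w, hwv, hw⟩ := (h v).2
    exact hwv (huniq w (hw.trans hv))

theorem ExtCSAdj.exists_eq_comp_swap {V : Type*} [DecidableEq V] {G : SimpleGraph V}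
    {g g' : V → Option ℕ} (h : ExtCSAdj G g g') :
    ∃ u w, G.Adj u w ∧ g' = g ∘ Equiv.swap u w := by
  obtain ⟨-, u, w, huw, hu, hw, hfix⟩ := h
  refine ⟨u, w, huw, funext fun x => ?_⟩
  rw [Function.comp_apply, Equiv.swap_apply_def]
  split_ifs with hxu hxw
  · rw [hxu, hw]
  · rw [hxw, hu]
  · exact (hfix x hxu hxw).symm

section CompletelyJoined

variable {V W : Type*} [DecidableEq V] {G : SimpleGraph V} {k : ℕ} {ι : W → V}
  {g g' : V → Option ℕ}

theorem swappableSet_comp_ne_empty_of_isExtColoring_comp_swap (hι : Function.Injective ι)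
    (hjoin : ∀ a v, v ∉ Set.range ι → G.Adj (ι a) v) {a : W} {v : V} (hv : v ∉ Set.range ι)
    (hcol : IsExtColoring G k (g ∘ Equiv.swap (ι a) v)) : swappableSet (g ∘ ι) ≠ ∅ := by
  intro hS
  obtain ⟨hne, b, hba, hb⟩ := swappableSet_eq_empty_iff.1 hS a
  have hbv : ι b ≠ v := fun h => hv ⟨b, h⟩
  have hfixed : (g ∘ Equiv.swap (ι a) v) (ι b) = g (ι a) := by
    rw [Function.comp_apply, Equiv.swap_apply_of_ne_of_ne (hι.ne hba) hbv]
    exact hb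
  have hmoved : (g ∘ Equiv.swap (ι a) v) v = g (ι a) := by simp
  have hstar := hcol.2 (hjoin b v hv) (hfixed.trans hmoved.symm)
  rw [hfixed] at hstar
  exact hne hstar

theorem ExtCSAdj.comp_perm_or_comp_eq [DecidableEq W] (hι : Function.Injective ι)
    (hjoin : ∀ a v, v ∉ Set.range ι → G.Adj (ι a) v) (hg' : IsExtColoring G k g')
    (h : ExtCSAdj G g g') (hS : swappableSet (g ∘ ι) = ∅) :
    (∃ σ : Equiv.Perm W, g' ∘ ι = g ∘ ι ∘ σ ∧ ∀ v ∉ Set.range ι, g' v = g v) ∨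
      g' ∘ ι = g ∘ ι := by
  obtain ⟨u, w, -, rfl⟩ := h.exists_eq_comp_swap
  by_cases hu : u ∈ Set.range ι <;> by_cases hw : w ∈ Set.range ι
  · obtain ⟨a, rfl⟩ := hu
    obtain ⟨b, rfl⟩ := hw
    refine Or.inl ⟨Equiv.swap a b, funext fun x => ?_, fun v hv => ?_⟩
    · simp [hι.map_swap]
    · rw [Function.comp_apply, Equiv.swap_apply_of_ne_of_ne (fun h => hv ⟨a, h.symm⟩)
        (fun h => hv ⟨b, h.symm⟩)]
  · obtain ⟨a, rfl⟩ := hu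
    exact absurd hS (swappableSet_comp_ne_empty_of_isExtColoring_comp_swap hι hjoin hw hg')
  · obtain ⟨b, rfl⟩ := hw
    rw [Equiv.swap_comm] at hg'
    exact absurd hS (swappableSet_comp_ne_empty_of_isExtColoring_comp_swap hι hjoin hu hg')
  · refine Or.inr (funext fun x => ?_)
    rw [Function.comp_apply, Function.comp_apply, Equiv.swap_apply_of_ne_of_ne
      (fun h => hu ⟨x, h⟩) (fun h => hw ⟨x, h⟩)]
    rfl

theorem IsReconfSeq.chain_one_side_of_swappableSet_comp_eq_empty [DecidableEq W]
    (hι : Function.Injective ι) (hjoin : ∀ a v, v ∉ Set.range ι → G.Adj (ι a) v)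
    {l : List (V → Option ℕ)} {f f' : V → Option ℕ}
    (hl : IsReconfSeq G k l f f') (hS : swappableSet (f ∘ ι) = ∅) :
    l.IsChain fun g g' => (∀ a, g' (ι a) = g (ι a)) ∨ ∀ v ∉ Set.range ι, g' v = g v := by
  obtain ⟨hhead, -, hcol, hchain⟩ := hl
  have hchain' := List.IsChain.iff_mem.1 hchain
  have hempty : ∀ g ∈ l, swappableSet (g ∘ ι) = ∅ := by
    refine hchain'.induction _ l (fun g g' ⟨_, hg', hadj⟩ hSg => ?_) fun hne => ?_
    · rcases hadj.comp_perm_or_comp_eq hι hjoin (hcol g' hg') hSg with ⟨σ, hσ, -⟩ | heq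
      · rw [hσ, ← Function.comp_assoc, swappableSet_comp_perm, hSg]
      · rwa [heq]
    · have hhead' := List.head?_eq_some_head hne
      rw [hhead, Option.some_inj] at hhead'
      rwa [← hhead']
  refine hchain'.imp fun g g' ⟨hg, hg', hadj⟩ => ?_
  rcases hadj.comp_perm_or_comp_eq hι hjoin (hcol g' hg') (hempty g hg) with ⟨σ, -, hout⟩ | heq
  · exact Or.inr hout
  · exact Or.inl (congrFun heq)

end CompletelyJoined

theorem graphJoin_adj_inl_inr {V₁ V₂ : Type*} (G₁ : SimpleGraph V₁) (G₂ : SimpleGraph V₂)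
    (u : V₁) (v : V₂) : (graphJoin G₁ G₂).Adj (Sum.inl u) (Sum.inr v) := by
  simp [graphJoin]

theorem stmt_13_general {V₁ V₂ : Type*}
    (G₁ : SimpleGraph V₁) (G₂ : SimpleGraph V₂) (k : ℕ)
    (fs ft : V₁ ⊕ V₂ → Option ℕ)
    (hempty : swappableSet (fs ∘ Sum.inl) = ∅ ∨ swappableSet (fs ∘ Sum.inr) = ∅) :
    ∀ l : List (V₁ ⊕ V₂ → Option ℕ), IsReconfSeq (graphJoin G₁ G₂) k l fs ft →
      l.Chain' (fun g g' => ¬ ∃ (u : V₁) (v : V₂),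
        g (Sum.inl u) ≠ g' (Sum.inl u) ∧ g (Sum.inr v) ≠ g' (Sum.inr v)) := by
  classical
  intro l hl
  rcases hempty with hS | hS
  · refine (hl.chain_one_side_of_swappableSet_comp_eq_empty Sum.inl_injective ?_ hS).imp
      fun g g' hside ⟨u, v, hu, hv⟩ => ?_
    · rintro a (b | b) hb
      exacts [absurd ⟨b, rfl⟩ hb, graphJoin_adj_inl_inr G₁ G₂ a b]
    · rcases hside with h | h
      exacts [hu (h u).symm, hv (h _ (by simp)).symm]
  · refine (hl.chain_one_side_of_swappableSet_comp_eq_empty Sum.inr_injective ?_ hS).imp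
      fun g g' hside ⟨u, v, hu, hv⟩ => ?_
    · rintro a (b | b) hb
      exacts [(graphJoin_adj_inl_inr G₁ G₂ b a).symm, absurd ⟨b, rfl⟩ hb]
    · rcases hside with h | h
      exacts [hv (h v).symm, hu (h _ (by simp)).symm]

/-- in a join, if the swappable set of (the restriction of) `f_s`
to one side is empty, then no reconfiguration sequence from `f_s` to `f_t` ever
performs a color swap on an edge joining the two sides (a cross swap changes a
vertex on each side). -/
theorem stmt_13 {V₁ V₂ : Type*} [Fintype V₁] [Fintype V₂]
    (G₁ : SimpleGraph V₁) (G₂ : SimpleGraph V₂) (k : ℕ) (hk : 1 ≤ k)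
    (fs ft : V₁ ⊕ V₂ → Option ℕ)
    (hfs : IsExtColoring (graphJoin G₁ G₂) k fs)
    (hft : IsExtColoring (graphJoin G₁ G₂) k ft)
    (hrec : ExtReconf (graphJoin G₁ G₂) k fs ft)
    (hempty : swappableSet (fs ∘ Sum.inl) = ∅ ∨ swappableSet (fs ∘ Sum.inr) = ∅) :
    ∀ l : List (V₁ ⊕ V₂ → Option ℕ), IsReconfSeq (graphJoin G₁ G₂) k l fs ft →
      l.Chain' (fun g g' => ¬ ∃ (u : V₁) (v : V₂),
        g (Sum.inl u) ≠ g' (Sum.inl u) ∧ g (Sum.inr v) ≠ g' (Sum.inr v)) :=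
  stmt_13_general G₁ G₂ k fs ft hempty
end

section
/- Let G = G₁ ⊗ G₂ be the join of two finite simple graphs, let k be a positive integer, and let f_s, f_t be extended k-colorings of G that are reconfigurable under color swapping. Then the set of swappable colors of the restriction f_s¹ of f_s to V(G₁) is empty if and only if the set of swappable colors of the restriction f_t¹ of f_t to V(G₁) is empty; similarly, the swappable set of f_s² is empty if and only if the swappable set of f_t² is empty. -/
lemma swappable_comp_equiv {V : Type*} (g : V → Option ℕ) (e : Equiv.Perm V) :
    swappableSet (g ∘ e) = swappableSet g := by
  ext c
  simp only [swappableSet, Set.mem_setOf_eq, Function.comp_apply]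
  constructor
  · rintro (⟨v, hv, hu⟩ | ⟨rfl, v, hv⟩)
    · left
      refine ⟨e v, hv, fun y hy => ?_⟩
      have := hu (e.symm y) (by simpa using hy)
      simpa using congrArg e this
    · exact Or.inr ⟨rfl, e v, hv⟩
  · rintro (⟨v, hv, hu⟩ | ⟨rfl, v, hv⟩)
    · left
      refine ⟨e.symm v, by simpa using hv, fun y hy => ?_⟩
      have := hu (e y) hy
      simpa using congrArg e.symm this
    · exact Or.inr ⟨rfl, e.symm v, by simpa using hv⟩

lemma join_adj_lr {V₁ V₂ : Type*} (G₁ : SimpleGraph V₁) (G₂ : SimpleGraph V₂)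
    (v : V₁) (w : V₂) : (graphJoin G₁ G₂).Adj (Sum.inl v) (Sum.inr w) := by
  simp [graphJoin, SimpleGraph.fromRel_adj]

lemma nonempty_inl {V₁ V₂ : Type*} {G₁ : SimpleGraph V₁} {G₂ : SimpleGraph V₂} {k : ℕ}
    {g f : V₁ ⊕ V₂ → Option ℕ} (hcol : IsExtColoring (graphJoin G₁ G₂) k g)
    (u : V₁) (w : V₂)
    (hgw : g (Sum.inr w) = f (Sum.inl u))
    (hgv : ∀ v : V₁, v ≠ u → g (Sum.inl v) = f (Sum.inl v)) :
    swappableSet (f ∘ Sum.inl) ≠ ∅ := by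
  intro h
  by_cases hcn : f (Sum.inl u) = none
  · have hm : (none : Option ℕ) ∈ swappableSet (f ∘ Sum.inl) :=
      Or.inr ⟨rfl, u, hcn⟩
    rw [h] at hm; exact hm
  · by_cases hun : ∃! v, f (Sum.inl v) = f (Sum.inl u)
    · have hm : f (Sum.inl u) ∈ swappableSet (f ∘ Sum.inl) := Or.inl hun
      rw [h] at hm; exact hm
    · obtain ⟨v, hv, hvu⟩ : ∃ v, f (Sum.inl v) = f (Sum.inl u) ∧ v ≠ u := by
        by_contra hno
        push_neg at hno
        exact hun ⟨u, rfl, fun y hy => hno y hy⟩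
      have hadj := join_adj_lr G₁ G₂ v w
      have heq : g (Sum.inl v) = g (Sum.inr w) := by
        rw [hgv v hvu, hgw, hv]
      have := hcol.2 hadj heq
      rw [hgv v hvu, hv] at this
      exact hcn this

lemma nonempty_inr {V₁ V₂ : Type*} {G₁ : SimpleGraph V₁} {G₂ : SimpleGraph V₂} {k : ℕ}
    {g f : V₁ ⊕ V₂ → Option ℕ} (hcol : IsExtColoring (graphJoin G₁ G₂) k g)
    (u : V₂) (w : V₁)
    (hgw : g (Sum.inl w) = f (Sum.inr u))
    (hgv : ∀ v : V₂, v ≠ u → g (Sum.inr v) = f (Sum.inr v)) :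
    swappableSet (f ∘ Sum.inr) ≠ ∅ := by
  intro h
  by_cases hcn : f (Sum.inr u) = none
  · have hm : (none : Option ℕ) ∈ swappableSet (f ∘ Sum.inr) :=
      Or.inr ⟨rfl, u, hcn⟩
    rw [h] at hm; exact hm
  · by_cases hun : ∃! v, f (Sum.inr v) = f (Sum.inr u)
    · have hm : f (Sum.inr u) ∈ swappableSet (f ∘ Sum.inr) := Or.inl hun
      rw [h] at hm; exact hm
    · obtain ⟨v, hv, hvu⟩ : ∃ v, f (Sum.inr v) = f (Sum.inr u) ∧ v ≠ u := by
        by_contra hno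
        push_neg at hno
        exact hun ⟨u, rfl, fun y hy => hno y hy⟩
      have hadj := join_adj_lr G₁ G₂ w v
      have heq : g (Sum.inl w) = g (Sum.inr v) := by
        rw [hgv v hvu, hgw, hv]
      have := hcol.2 hadj heq
      rw [hgw, ← hv] at this
      rw [hv] at this
      exact hcn this

lemma step_iff {V₁ V₂ : Type*} {G₁ : SimpleGraph V₁} {G₂ : SimpleGraph V₂} {k : ℕ}
    {f f' : V₁ ⊕ V₂ → Option ℕ} (h : ExtCSStep (graphJoin G₁ G₂) k f f') :
    (swappableSet (f ∘ Sum.inl) = ∅ ↔ swappableSet (f' ∘ Sum.inl) = ∅) ∧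
    (swappableSet (f ∘ Sum.inr) = ∅ ↔ swappableSet (f' ∘ Sum.inr) = ∅) := by
  classical
  obtain ⟨hf, hf', hne, a, b, hadj, hab, hba, hrest⟩ := h
  have hneq : a ≠ b := hadj.ne
  match a, b with
  | Sum.inl u, Sum.inl w =>
      have huw : u ≠ w := fun e => hneq (by rw [e])
      have h1 : f' ∘ Sum.inl = (f ∘ Sum.inl) ∘ (Equiv.swap u w) := by
        funext x
        by_cases hx : x = u
        · subst hx; simp only [Function.comp_apply, Equiv.swap_apply_left]; exact hba.symm
        · by_cases hx2 : x = w
          · subst hx2; simp only [Function.comp_apply, Equiv.swap_apply_right]; exact hab.symm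
          · simp only [Function.comp_apply, Equiv.swap_apply_of_ne_of_ne hx hx2]
            exact (hrest (Sum.inl x) (by simpa using hx) (by simpa using hx2)).symm
      have h2 : f ∘ Sum.inr = f' ∘ Sum.inr := by
        funext x
        exact hrest (Sum.inr x) (by simp) (by simp)
      rw [h1, swappable_comp_equiv, h2]
      exact ⟨Iff.rfl, Iff.rfl⟩
  | Sum.inr u, Sum.inr w =>
      have huw : u ≠ w := fun e => hneq (by rw [e])
      have h1 : f' ∘ Sum.inr = (f ∘ Sum.inr) ∘ (Equiv.swap u w) := by
        funext x
        by_cases hx : x = u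
        · subst hx; simp only [Function.comp_apply, Equiv.swap_apply_left]; exact hba.symm
        · by_cases hx2 : x = w
          · subst hx2; simp only [Function.comp_apply, Equiv.swap_apply_right]; exact hab.symm
          · simp only [Function.comp_apply, Equiv.swap_apply_of_ne_of_ne hx hx2]
            exact (hrest (Sum.inr x) (by simpa using hx) (by simpa using hx2)).symm
      have h2 : f ∘ Sum.inl = f' ∘ Sum.inl := by
        funext x
        exact hrest (Sum.inl x) (by simp) (by simp)
      rw [h1, swappable_comp_equiv, h2]
      exact ⟨Iff.rfl, Iff.rfl⟩
  | Sum.inl u, Sum.inr w =>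
      have n1 : swappableSet (f ∘ Sum.inl) ≠ ∅ :=
        nonempty_inl hf' u w hab.symm
          (fun v hv => (hrest (Sum.inl v) (by simpa using hv) (by simp)).symm)
      have n1' : swappableSet (f' ∘ Sum.inl) ≠ ∅ :=
        nonempty_inl hf u w hba
          (fun v hv => hrest (Sum.inl v) (by simpa using hv) (by simp))
      have n2 : swappableSet (f ∘ Sum.inr) ≠ ∅ :=
        nonempty_inr hf' w u hba.symm
          (fun v hv => (hrest (Sum.inr v) (by simp) (by simpa using hv)).symm)
      have n2' : swappableSet (f' ∘ Sum.inr) ≠ ∅ :=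
        nonempty_inr hf w u hab
          (fun v hv => hrest (Sum.inr v) (by simp) (by simpa using hv))
      exact ⟨iff_of_false n1 n1', iff_of_false n2 n2'⟩
  | Sum.inr u, Sum.inl w =>
      have n1 : swappableSet (f ∘ Sum.inl) ≠ ∅ :=
        nonempty_inl hf' w u hba.symm
          (fun v hv => (hrest (Sum.inl v) (by simp) (by simpa using hv)).symm)
      have n1' : swappableSet (f' ∘ Sum.inl) ≠ ∅ :=
        nonempty_inl hf w u hab
          (fun v hv => hrest (Sum.inl v) (by simp) (by simpa using hv))
      have n2 : swappableSet (f ∘ Sum.inr) ≠ ∅ :=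
        nonempty_inr hf' u w hab.symm
          (fun v hv => (hrest (Sum.inr v) (by simpa using hv) (by simp)).symm)
      have n2' : swappableSet (f' ∘ Sum.inr) ≠ ∅ :=
        nonempty_inr hf u w hba
          (fun v hv => hrest (Sum.inr v) (by simpa using hv) (by simp))
      exact ⟨iff_of_false n1 n1', iff_of_false n2 n2'⟩

/-- in a join, for reconfigurable extended colorings `f_s, f_t`,
the swappable set of the restriction of `f_s` to a side is empty iff the
swappable set of the corresponding restriction of `f_t` is empty. -/
theorem stmt_14 {V₁ V₂ : Type*} [Fintype V₁] [Fintype V₂]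
    (G₁ : SimpleGraph V₁) (G₂ : SimpleGraph V₂) (k : ℕ) (hk : 1 ≤ k)
    (fs ft : V₁ ⊕ V₂ → Option ℕ)
    (hfs : IsExtColoring (graphJoin G₁ G₂) k fs)
    (hft : IsExtColoring (graphJoin G₁ G₂) k ft)
    (hrec : ExtReconf (graphJoin G₁ G₂) k fs ft) :
    (swappableSet (fs ∘ Sum.inl) = ∅ ↔ swappableSet (ft ∘ Sum.inl) = ∅) ∧
    (swappableSet (fs ∘ Sum.inr) = ∅ ↔ swappableSet (ft ∘ Sum.inr) = ∅) := by
  induction hrec with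
  | refl => exact ⟨Iff.rfl, Iff.rfl⟩
  | tail _ hstep ih =>
      obtain ⟨i1, i2⟩ := step_iff hstep
      obtain ⟨j1, j2⟩ := ih hstep.1
      exact ⟨j1.trans i1, j2.trans i2⟩
end
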